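/- arXiv:1403.5132 — 8 statements merged into one kernel-verified Lean document; each statement's English description precedes it below -/
import Mathlib

section
/- For every natural number r ≥ 1, the Bell number B(2r) satisfies B(2r) = Σ_{l=0}^{r} l! · (Σ_{k=l}^{r} S(r,k) · C(k,l))², where S(r,k) denotes the Stirling number of the second kind and C(k,l) the binomial coefficient. (This expresses the dimension of the partition algebra P_r, which equals the number of set partitions of a 2r-element set, via its iterated inflation along the layers of fixed propagating number.) -/
/-- The Bell number: the number of set partitions of an `n`-element set. -/
noncomputable def bell (n : ℕ) : ℕ :=
  Nat.card (Finpartition (Finset.univ : Finset (Fin n)))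

/-- The Stirling number of the second kind: the number of set partitions of an
`r`-element set into exactly `k` blocks. -/
noncomputable def stirling (r k : ℕ) : ℕ :=
  Nat.card {P : Finpartition (Finset.univ : Finset (Fin r)) // P.parts.card = k}

/-!
A partition of `Fin r ⊕ Fin r` amounts to a partition `s` of the top copy, a partition `t` of the
bottom copy, and a partial bijection between the blocks of `s` and those of `t`, pairing the two
halves of each propagating block. Partial bijections with `l` pairs between sets of sizes `k` and
`k'` number `l! C(k,l) C(k',l)`, so for each `l` the sum over `s` and `t` factorises as
`l! (Σ_s C(|s|,l))²`, and grouping the `s` by their number of blocks brings in `S(r,k)`.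
-/

open Finset Function
open scoped Nat

namespace Finpartition

variable {α : Type*} [Fintype α] [DecidableEq α]

lemma image_part_univ (P : Finpartition (univ : Finset α)) : univ.image P.part = P.parts := by
  ext p
  refine ⟨fun hp => ?_, fun hp => ?_⟩
  · obtain ⟨a, -, rfl⟩ := mem_image.1 hp
    exact P.part_mem.2 (mem_univ a)
  · obtain ⟨a, -, ha⟩ := P.part_surjOn hp
    exact mem_image.2 ⟨a, mem_univ a, ha⟩

noncomputable def equivSetoid : Finpartition (univ : Finset α) ≃ Setoid α where
  toFun P := Setoid.ker P.part
  invFun s := by classical exact ofSetoid s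
  left_inv P := by
    ext p
    dsimp only
    rw [ofSetoid, ofSetSetoid_parts, ← image_part_univ]
    congr! with a
    ext b
    simp [Setoid.ker_def, P.mem_part_iff_part_eq_part (mem_univ b) (mem_univ a), eq_comm]
  right_inv s := by
    classical
    ext a b
    beta_reduce
    rw [Setoid.ker_def, eq_comm, ← mem_part_iff_part_eq_part _ (mem_univ b) (mem_univ a),
      mem_part_ofSetoid_iff_rel]

lemma card_parts_eq_card_quotient (P : Finpartition (univ : Finset α)) :
    #P.parts = Nat.card (Quotient (equivSetoid P)) := by
  rw [equivSetoid, Equiv.coe_fn_mk, Nat.card_congr (Setoid.quotientKerEquivRange P.part),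
    Nat.card_coe_set_eq, ← Set.image_univ, ← coe_univ, ← coe_image, Set.ncard_coe_finset,
    image_part_univ]

end Finpartition

abbrev PartialInj (X Y : Type*) := Σ D : Finset X, D ↪ Y

namespace PartialInj

variable {X Y : Type*}

def graph (p : PartialInj X Y) (x : X) (y : Y) : Prop :=
  ∃ h : x ∈ p.1, p.2 ⟨x, h⟩ = y

lemma graph_injective : Injective (graph : PartialInj X Y → X → Y → Prop) := by
  rintro ⟨D₁, f₁⟩ ⟨D₂, f₂⟩ h
  have graph_iff : ∀ x y, graph ⟨D₁, f₁⟩ x y ↔ graph ⟨D₂, f₂⟩ x y := by simp [h]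
  obtain rfl : D₁ = D₂ := by
    ext x
    exact ⟨fun hx => ((graph_iff x _).1 ⟨hx, rfl⟩).1,
      fun hx => ((graph_iff x _).2 ⟨hx, rfl⟩).1⟩
  congr
  ext ⟨x, hx⟩
  exact ((graph_iff x _).1 ⟨hx, rfl⟩).2.symm

lemma exists_graph_eq [Finite X] (R : X → Y → Prop) (hfun : ∀ x y y', R x y → R x y' → y = y')
    (hinj : ∀ x x' y, R x y → R x' y → x = x') : ∃ p : PartialInj X Y, p.graph = R := by
  classical
  have := Fintype.ofFinite X
  let D := univ.filter fun x => ∃ y, R x y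
  let partner (x : D) : Y := (mem_filter.1 x.2).2.choose
  have partner_spec (x : D) : R x (partner x) := (mem_filter.1 x.2).2.choose_spec
  refine ⟨⟨D, partner, fun x x' h =>
    Subtype.ext (hinj _ _ _ (partner_spec x) (h ▸ partner_spec x'))⟩, ?_⟩
  ext x y
  exact ⟨fun ⟨hx, hy⟩ => hy ▸ partner_spec ⟨x, hx⟩,
    fun hR => ⟨mem_filter.2 ⟨mem_univ x, y, hR⟩, hfun _ _ _ (partner_spec _) hR⟩⟩

open Classical in
noncomputable def link (p : PartialInj X Y) (x : X) : Y ⊕ X :=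
  if h : x ∈ p.1 then .inl (p.2 ⟨x, h⟩) else .inr x

lemma link_eq_inl_iff (p : PartialInj X Y) {x : X} {y : Y} : p.link x = .inl y ↔ p.graph x y := by
  unfold link graph
  split_ifs with h <;> simp [h]

lemma link_injective (p : PartialInj X Y) : Injective p.link := by
  intro x x' h
  unfold link at h
  split_ifs at h with hx hx' hx' <;> simp_all [Subtype.ext_iff]

lemma card_eq_sum [Finite X] [Finite Y] :
    Nat.card (PartialInj X Y) =
      ∑ l ∈ range (Nat.card X + 1), l ! * (Nat.card X).choose l * (Nat.card Y).choose l := by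
  have := Fintype.ofFinite X
  have := Fintype.ofFinite Y
  rw [Nat.card_sigma, ← powerset_univ]
  simp only [Nat.card_eq_fintype_card, Fintype.card_embedding_eq, Fintype.card_coe]
  rw [sum_powerset_apply_card, card_univ]
  refine sum_congr rfl fun l _ => ?_
  rw [smul_eq_mul, Nat.descFactorial_eq_factorial_mul_choose]
  ring

end PartialInj

namespace Setoid

variable {α β : Type*}

instance [Finite α] : Finite (Setoid α) :=
  Finite.of_injective _ fun _ _ => eq_iff_rel_eq.2

noncomputable instance [Finite α] : Fintype (Setoid α) :=
  Fintype.ofFinite _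

lemma card_quotient_le [Finite α] (s : Setoid α) : Nat.card (Quotient s) ≤ Nat.card α :=
  Nat.card_le_card_of_surjective _ Quotient.mk_surjective

theorem sum_choose_card_quotient [Finite α] (l : ℕ) :
    ∑ s : Setoid α, (Nat.card (Quotient s)).choose l =
      ∑ k ∈ Icc l (Nat.card α),
        Nat.card {s : Setoid α // Nat.card (Quotient s) = k} * k.choose l := by
  classical
  rw [← sum_fiberwise_of_maps_to' (g := fun s : Setoid α => Nat.card (Quotient s))
    (f := fun k => k.choose l) (t := range (Nat.card α + 1))
    fun s _ => mem_range_succ_iff.2 s.card_quotient_le]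
  simp only [sum_const, smul_eq_mul, Nat.card_eq_fintype_card, Fintype.card_subtype]
  refine (sum_subset (fun k hk => ?_) fun k hk hk' => ?_).symm
  · exact mem_range_succ_iff.2 (mem_Icc.1 hk).2
  · rw [Nat.choose_eq_zero_of_lt, mul_zero]
    simp_all

/-- The partition of `α ⊕ β` whose blocks are those of `s` and of `t`, except that each pair of
blocks matched by `p` is merged into one. -/
noncomputable def ofPartialInj (s : Setoid α) (t : Setoid β)
    (p : PartialInj (Quotient s) (Quotient t)) : Setoid (α ⊕ β) :=
  ker (Sum.elim (p.link ∘ Quotient.mk s) (Sum.inl ∘ Quotient.mk t))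

section ofPartialInj

variable {s : Setoid α} {t : Setoid β} {p : PartialInj (Quotient s) (Quotient t)}

lemma ofPartialInj_inl_inl {a a' : α} : ofPartialInj s t p (.inl a) (.inl a') ↔ s a a' := by
  rw [ofPartialInj, ker_def, Sum.elim_inl, Sum.elim_inl, comp_apply, comp_apply,
    p.link_injective.eq_iff, Quotient.eq]

lemma ofPartialInj_inr_inr {b b' : β} : ofPartialInj s t p (.inr b) (.inr b') ↔ t b b' := by
  rw [ofPartialInj, ker_def, Sum.elim_inr, Sum.elim_inr, comp_apply, comp_apply, Sum.inl.injEq,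
    Quotient.eq]

lemma ofPartialInj_inl_inr {a : α} {b : β} :
    ofPartialInj s t p (.inl a) (.inr b) ↔ p.graph ⟦a⟧ ⟦b⟧ := by
  rw [ofPartialInj, ker_def, Sum.elim_inl, Sum.elim_inr, comp_apply, comp_apply,
    p.link_eq_inl_iff]

end ofPartialInj

lemma ofPartialInj_bijective [Finite α] :
    Bijective fun x : Σ (s : Setoid α) (t : Setoid β), PartialInj (Quotient s) (Quotient t) =>
      ofPartialInj x.1 x.2.1 x.2.2 := by
  constructor
  · rintro ⟨s₁, t₁, p₁⟩ ⟨s₂, t₂, p₂⟩ h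
    dsimp only at h
    obtain rfl : s₁ = s₂ := by
      ext a a'
      rw [← ofPartialInj_inl_inl (t := t₁) (p := p₁), h, ofPartialInj_inl_inl]
    obtain rfl : t₁ = t₂ := by
      ext b b'
      rw [← ofPartialInj_inr_inr (s := s₁) (p := p₁), h, ofPartialInj_inr_inr]
    obtain rfl : p₁ = p₂ := by
      refine PartialInj.graph_injective (funext₂ fun c e => ?_)
      induction c, e using Quotient.inductionOn₂ with
      | h a b => rw [← propext ofPartialInj_inl_inr, h, propext ofPartialInj_inl_inr]
    rfl
  · intro u
    let s := u.comap Sum.inl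
    let t := u.comap Sum.inr
    let R : Quotient s → Quotient t → Prop := Quotient.lift₂ (fun a b => u (.inl a) (.inr b))
      fun a b a' b' (ha : u _ _) (hb : u _ _) =>
        propext ⟨fun h => u.trans (u.symm ha) (u.trans h hb),
          fun h => u.trans ha (u.trans h (u.symm hb))⟩
    obtain ⟨p, hp⟩ := PartialInj.exists_graph_eq R
      (by
        rintro ⟨a⟩ ⟨b⟩ ⟨b'⟩ (h : u _ _) (h' : u _ _)
        exact Quotient.sound (show u _ _ from u.trans (u.symm h) h'))
      (by
        rintro ⟨a⟩ ⟨a'⟩ ⟨b⟩ (h : u _ _) (h' : u _ _)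
        exact Quotient.sound (show u _ _ from u.trans h (u.symm h')))
    refine ⟨⟨s, t, p⟩, ?_⟩
    ext (a | b) (a' | b')
    · exact ofPartialInj_inl_inl
    · rw [ofPartialInj_inl_inr, hp]; rfl
    · rw [comm', ofPartialInj_inl_inr, hp, u.comm']; rfl
    · exact ofPartialInj_inr_inr

end Setoid

theorem card_setoid_sum {α β : Type*} [Finite α] [Finite β] :
    Nat.card (Setoid (α ⊕ β)) =
      ∑ l ∈ range (Nat.card α + 1), l ! * (∑ s : Setoid α, (Nat.card (Quotient s)).choose l) *
        ∑ t : Setoid β, (Nat.card (Quotient t)).choose l := by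
  rw [← Nat.card_eq_of_bijective _ Setoid.ofPartialInj_bijective, Nat.card_sigma]
  calc ∑ s : Setoid α, Nat.card (Σ t : Setoid β, PartialInj (Quotient s) (Quotient t))
      = ∑ s : Setoid α, ∑ t : Setoid β, ∑ l ∈ range (Nat.card α + 1),
          l ! * (Nat.card (Quotient s)).choose l * (Nat.card (Quotient t)).choose l := by
        refine sum_congr rfl fun s _ => ?_
        rw [Nat.card_sigma]
        refine sum_congr rfl fun t _ => ?_
        rw [PartialInj.card_eq_sum]
        refine sum_subset (range_subset_range.2 (Nat.succ_le_succ s.card_quotient_le)) ?_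
        intro l _ hl
        rw [Nat.choose_eq_zero_of_lt (by simpa using hl), mul_zero, zero_mul]
    _ = ∑ l ∈ range (Nat.card α + 1), ∑ s : Setoid α, ∑ t : Setoid β,
          l ! * (Nat.card (Quotient s)).choose l * (Nat.card (Quotient t)).choose l := by
        exact (sum_congr rfl fun s _ => sum_comm).trans sum_comm
    _ = _ := by
        simp_rw [mul_assoc, sum_mul_sum, mul_sum]

def Equiv.setoidCongr {α β : Type*} (e : α ≃ β) : Setoid α ≃ Setoid β where
  toFun s := s.comap e.symm
  invFun t := t.comap e
  left_inv s := by ext; simp [Setoid.comap_rel]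
  right_inv t := by ext; simp [Setoid.comap_rel]

lemma bell_eq_card_setoid {n : ℕ} {α : Type*} (e : Fin n ≃ α) : bell n = Nat.card (Setoid α) :=
  Nat.card_congr (Finpartition.equivSetoid.trans e.setoidCongr)

lemma stirling_eq_card_setoid (r k : ℕ) :
    stirling r k = Nat.card {s : Setoid (Fin r) // Nat.card (Quotient s) = k} :=
  Nat.card_congr (Finpartition.equivSetoid.subtypeEquiv fun P => by
    rw [P.card_parts_eq_card_quotient])

theorem bell_two_mul_eq_sum_layers_general (r : ℕ) :
    bell (2 * r) =
      ∑ l ∈ Finset.range (r + 1),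
        Nat.factorial l *
          (∑ k ∈ Finset.Icc l r, stirling r k * Nat.choose k l) ^ 2 := by
  rw [bell_eq_card_setoid ((finCongr (two_mul r)).trans finSumFinEquiv.symm), card_setoid_sum,
    Nat.card_fin]
  refine sum_congr rfl fun l _ => ?_
  simp only [Setoid.sum_choose_card_quotient, Nat.card_fin, stirling_eq_card_setoid]
  ring

/-- For `r ≥ 1`, `B(2r) = Σ_{l=0}^{r} l! · (Σ_{k=l}^{r} S(r,k) · C(k,l))²`. -/
theorem bell_two_mul_eq_sum_layers (r : ℕ) (hr : 1 ≤ r) :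
    bell (2 * r) =
      ∑ l ∈ Finset.range (r + 1),
        Nat.factorial l *
          (∑ k ∈ Finset.Icc l r, stirling r k * Nat.choose k l) ^ 2 :=
  bell_two_mul_eq_sum_layers_general r
end

section
/- Let r ≥ 1 and 0 ≤ l ≤ r. The number of set partitions of the 2r-element set {1,…,r,1',…,r'} whose propagating number is exactly l equals l! · (Σ_{k=l}^{r} S(r,k) · C(k,l))². Here the propagating number of a set partition of {1,…,r,1',…,r'} is the number of blocks containing both an element of {1,…,r} and an element of {1',…,r'}. -/
/-- The propagating number of a set partition of `{1,…,r} ⊔ {1',…,r'}`: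
the number of blocks containing both an element of the top row (`inl`) and the
bottom row (`inr`). -/
def propagatingNumber (r : ℕ)
    (P : Finpartition (Finset.univ : Finset (Fin r ⊕ Fin r))) : ℕ :=
  (P.parts.filter (fun b =>
    (∃ x ∈ b, Sum.isLeft x = true) ∧ (∃ x ∈ b, Sum.isRight x = true))).card

/-!
A partition of `α ⊕ β` is determined by its restrictions `P₁` to `α` and `P₂` to `β` together
with the pairs `(b ∩ α, b ∩ β)` of its crossing blocks `b`. These pairs form a matching between
the blocks of `P₁` and those of `P₂`, and conversely any such matching glues `P₁` and `P₂` into a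
partition of `α ⊕ β`. A matching of size `l` between sets of sizes `m` and `n` is the graph of an
injection from an `l`-subset of the first, so there are `C(m,l) C(n,l) l!` of them. Summing over
`P₁` and `P₂`, grouped by their numbers of blocks, gives `l! (∑ₖ S(r,k) C(k,l))²`.
-/

open Finset
open scoped Nat

instance Setoid.decidableRelKer {α β : Type*} [DecidableEq β] (f : α → β) :
    DecidableRel (Setoid.ker f) :=
  fun _ _ => decidable_of_iff _ Setoid.ker_def.symm

namespace Finset

variable {σ τ : Type*}

def IsMatching (M : Finset (σ × τ)) : Prop :=
  ∀ p ∈ M, ∀ q ∈ M, p.1 = q.1 ∨ p.2 = q.2 → p = q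

def embeddingGraph {S : Finset σ} {B : Finset τ} (f : S ↪ B) : Finset (σ × τ) :=
  univ.map ⟨fun s : S => ((s : σ), (f s : τ)), fun _ _ h => Subtype.ext (Prod.mk.inj h).1⟩

variable {S : Finset σ} {B : Finset τ}

lemma mem_embeddingGraph {f : S ↪ B} {p : σ × τ} :
    p ∈ embeddingGraph f ↔ ∃ s : S, ((s : σ), (f s : τ)) = p := by
  simp only [embeddingGraph, mem_map, mem_univ, true_and]
  rfl

lemma embeddingGraph_injective : Function.Injective (embeddingGraph (S := S) (B := B)) := by
  intro f g h
  ext s : 2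
  obtain ⟨s', hs'⟩ := mem_embeddingGraph.1 (h ▸ mem_embeddingGraph.2 ⟨s, rfl⟩)
  obtain ⟨h₁, h₂⟩ := Prod.mk.inj hs'
  rw [← h₂, Subtype.ext h₁]

lemma IsMatching.exists_embeddingGraph_eq [DecidableEq σ] {M : Finset (σ × τ)}
    (hM : M.IsMatching) (hMB : ∀ p ∈ M, p.2 ∈ B) :
    ∃ f : M.image Prod.fst ↪ B, embeddingGraph f = M := by
  have hex (s : M.image Prod.fst) : ∃ b, ((s : σ), b) ∈ M := by
    obtain ⟨p, hp, hps⟩ := mem_image.1 s.2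
    exact ⟨p.2, hps ▸ hp⟩
  choose partner hpartner using hex
  have partner_injective : Function.Injective partner := fun s s' h =>
    Subtype.ext (congrArg Prod.fst (hM _ (hpartner s) _ (hpartner s') (.inr h)))
  refine ⟨⟨fun s => ⟨partner s, hMB _ (hpartner s)⟩, fun s s' h =>
    partner_injective (congrArg Subtype.val h)⟩,
    Subset.antisymm (fun p hp => ?_) fun p hp => ?_⟩
  · obtain ⟨s, rfl⟩ := mem_embeddingGraph.1 hp
    exact hpartner s
  · exact mem_embeddingGraph.2
      ⟨⟨p.1, mem_image_of_mem _ hp⟩, hM _ (hpartner _) _ hp (.inl rfl)⟩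

lemma image_fst_embeddingGraph [DecidableEq σ] (f : S ↪ B) :
    (embeddingGraph f).image Prod.fst = S := by
  ext x
  rw [mem_image]
  constructor
  · rintro ⟨p, hp, rfl⟩
    obtain ⟨s, rfl⟩ := mem_embeddingGraph.1 hp
    exact s.2
  · exact fun hx => ⟨_, mem_embeddingGraph.2 ⟨⟨x, hx⟩, rfl⟩, rfl⟩

variable [DecidableEq σ] [DecidableEq τ]

instance (M : Finset (σ × τ)) : Decidable M.IsMatching :=
  inferInstanceAs (Decidable (∀ p ∈ M, ∀ q ∈ M, p.1 = q.1 ∨ p.2 = q.2 → p = q))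

def matchings (A : Finset σ) (B : Finset τ) (l : ℕ) : Finset (Finset (σ × τ)) :=
  ((A ×ˢ B).powersetCard l).filter IsMatching

lemma mem_matchings {A : Finset σ} {l : ℕ} {M : Finset (σ × τ)} :
    M ∈ A.matchings B l ↔ M ⊆ A ×ˢ B ∧ #M = l ∧ M.IsMatching := by
  rw [matchings, mem_filter, mem_powersetCard, and_assoc]

lemma embeddingGraph_mem_matchings {A : Finset σ} (hSA : S ⊆ A) (f : S ↪ B) :
    embeddingGraph f ∈ A.matchings B #S := by
  refine mem_matchings.2 ⟨fun p hp => ?_, ?_, fun p hp q hq h => ?_⟩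
  · obtain ⟨s, rfl⟩ := mem_embeddingGraph.1 hp
    exact mem_product.2 ⟨hSA s.2, (f s).2⟩
  · rw [embeddingGraph, card_map, card_univ, Fintype.card_coe]
  · obtain ⟨s, rfl⟩ := mem_embeddingGraph.1 hp
    obtain ⟨s', rfl⟩ := mem_embeddingGraph.1 hq
    rcases h with h | h
    · rw [Subtype.ext h]
    · rw [f.injective (Subtype.ext h)]

lemma card_filter_matchings_image_fst_eq {A : Finset σ} (hSA : S ⊆ A) :
    #{M ∈ A.matchings B #S | M.image Prod.fst = S} = (#B).descFactorial #S := by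
  have hbij :
      #(univ : Finset (S ↪ B)) = #{M ∈ A.matchings B #S | M.image Prod.fst = S} := by
    refine card_bij (fun f _ => embeddingGraph f)
      (fun f _ => mem_filter.2 ⟨embeddingGraph_mem_matchings hSA f, image_fst_embeddingGraph f⟩)
      (fun f _ g _ h => embeddingGraph_injective h) (fun M hM => ?_)
    obtain ⟨hM, rfl⟩ := mem_filter.1 hM
    obtain ⟨hMAB, -, hMatch⟩ := mem_matchings.1 hM
    obtain ⟨f, hf⟩ := hMatch.exists_embeddingGraph_eq fun p hp => (mem_product.1 (hMAB hp)).2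
    exact ⟨f, mem_univ f, hf⟩
  rw [← hbij, card_univ, Fintype.card_embedding_eq, Fintype.card_coe, Fintype.card_coe]

lemma card_matchings (A : Finset σ) (B : Finset τ) (l : ℕ) :
    #(A.matchings B l) = (#A).choose l * (#B).choose l * l ! := by
  have hmaps : ∀ M ∈ A.matchings B l, M.image Prod.fst ∈ A.powersetCard l := by
    intro M hM
    obtain ⟨hMAB, hMl, hMatch⟩ := mem_matchings.1 hM
    refine mem_powersetCard.2 ⟨fun x hx => ?_,
      (card_image_of_injOn fun p hp q hq h => hMatch p hp q hq (.inl h)).trans hMl⟩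
    obtain ⟨p, hp, rfl⟩ := mem_image.1 hx
    exact (mem_product.1 (hMAB hp)).1
  rw [card_eq_sum_card_fiberwise hmaps]
  calc ∑ S ∈ A.powersetCard l, #{M ∈ A.matchings B l | M.image Prod.fst = S}
      = ∑ S ∈ A.powersetCard l, (#B).descFactorial l := by
        refine sum_congr rfl fun S hS => ?_
        obtain ⟨hSA, rfl⟩ := mem_powersetCard.1 hS
        exact card_filter_matchings_image_fst_eq hSA
    _ = (#A).choose l * (#B).choose l * l ! := by
        rw [sum_const, card_powersetCard, smul_eq_mul, Nat.descFactorial_eq_factorial_mul_choose]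
        ring

end Finset

namespace Finpartition

section Comap

variable {α γ : Type*} [Fintype α] [DecidableEq α] [Fintype γ] [DecidableEq γ]

lemma mem_part_comm (P : Finpartition (univ : Finset α)) {a b : α} :
    b ∈ P.part a ↔ a ∈ P.part b := by
  rw [P.mem_part_iff_part_eq_part (mem_univ b) (mem_univ a),
    P.mem_part_iff_part_eq_part (mem_univ a) (mem_univ b), eq_comm]

lemma parts_eq_image_part (P : Finpartition (univ : Finset α)) :
    P.parts = univ.image P.part := by
  ext t
  refine ⟨fun ht => ?_, fun ht => ?_⟩
  · obtain ⟨a, -, rfl⟩ := P.part_surjOn ht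
    exact mem_image_of_mem _ (mem_univ a)
  · obtain ⟨a, -, rfl⟩ := mem_image.1 ht
    exact P.part_mem.2 (mem_univ a)

lemma ext_of_mem_part {P Q : Finpartition (univ : Finset α)}
    (h : ∀ a b, b ∈ P.part a ↔ b ∈ Q.part a) : P = Q := by
  have hpart : P.part = Q.part := funext fun a => Finset.ext (h a)
  ext1
  rw [parts_eq_image_part, parts_eq_image_part, hpart]

def comap (f : γ → α) (P : Finpartition (univ : Finset α)) : Finpartition (univ : Finset γ) :=
  ofSetoid (Setoid.ker (P.part ∘ f))

lemma mem_part_comap {f : γ → α} {P : Finpartition (univ : Finset α)} {c c' : γ} :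
    c' ∈ (P.comap f).part c ↔ f c' ∈ P.part (f c) := by
  rw [comap, mem_part_ofSetoid_iff_rel, P.mem_part_iff_part_eq_part (mem_univ _) (mem_univ _),
    eq_comm, Setoid.ker_def, Function.comp_apply, Function.comp_apply]

lemma part_comap_eq_part_comap_iff {f : γ → α} {P : Finpartition (univ : Finset α)}
    {c c' : γ} :
    (P.comap f).part c = (P.comap f).part c' ↔ f c' ∈ P.part (f c) := by
  rw [← (P.comap f).mem_part_iff_part_eq_part (mem_univ _) (mem_univ _), mem_part_comm,
    mem_part_comap]

end Comap

variable {α β : Type*} [Fintype α] [Fintype β] [DecidableEq α] [DecidableEq β]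

section Crossing

variable (P : Finpartition (univ : Finset (α ⊕ β)))

def crossingParts : Finset (Finset (α ⊕ β)) :=
  P.parts.filter fun b => b.toLeft.Nonempty ∧ b.toRight.Nonempty

def crossingPairs : Finset (Finset α × Finset β) :=
  P.crossingParts.image fun b => (b.toLeft, b.toRight)

variable {P}

lemma toLeft_eq_part_comap_inl {b : Finset (α ⊕ β)} {x : α} (hb : b ∈ P.parts)
    (hx : Sum.inl x ∈ b) : b.toLeft = (P.comap Sum.inl).part x := by
  ext x'
  rw [mem_toLeft, mem_part_comap, P.part_eq_of_mem hb hx]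

lemma toRight_eq_part_comap_inr {b : Finset (α ⊕ β)} {y : β} (hb : b ∈ P.parts)
    (hy : Sum.inr y ∈ b) : b.toRight = (P.comap Sum.inr).part y := by
  ext y'
  rw [mem_toRight, mem_part_comap, P.part_eq_of_mem hb hy]

lemma card_crossingPairs : #P.crossingPairs = #P.crossingParts :=
  card_image_of_injective _ fun b c h => by
    obtain ⟨hl, hr⟩ := Prod.mk.inj h
    rw [← toLeft_disjSum_toRight (u := b), hl, hr, toLeft_disjSum_toRight]

lemma exists_eq_of_mem_crossingPairs {p : Finset α × Finset β} (hp : p ∈ P.crossingPairs) :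
    ∃ x y, Sum.inr y ∈ P.part (Sum.inl x) ∧
      p = ((P.comap Sum.inl).part x, (P.comap Sum.inr).part y) := by
  obtain ⟨b, hb, rfl⟩ := mem_image.1 hp
  obtain ⟨hbP, ⟨x, hx⟩, ⟨y, hy⟩⟩ := mem_filter.1 hb
  rw [mem_toLeft] at hx
  rw [mem_toRight] at hy
  refine ⟨x, y, P.part_eq_of_mem hbP hx ▸ hy, ?_⟩
  rw [toLeft_eq_part_comap_inl hbP hx, toRight_eq_part_comap_inr hbP hy]

lemma mk_mem_crossingPairs_iff {x : α} {y : β} :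
    ((P.comap Sum.inl).part x, (P.comap Sum.inr).part y) ∈ P.crossingPairs ↔
      Sum.inr y ∈ P.part (Sum.inl x) := by
  refine ⟨fun h => ?_, fun h => ?_⟩
  · obtain ⟨x', y', hxy', he⟩ := exists_eq_of_mem_crossingPairs h
    obtain ⟨hx, hy⟩ := Prod.ext_iff.1 he
    rw [part_comap_eq_part_comap_iff] at hx hy
    rw [P.mem_part_iff_part_eq_part (mem_univ _) (mem_univ _)] at hxy' ⊢
    rw [P.mem_part_comm, P.mem_part_iff_part_eq_part (mem_univ _) (mem_univ _)] at hx hy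
    rw [hy, hxy', hx]
  · have hP : P.part (Sum.inl x) ∈ P.parts := P.part_mem.2 (mem_univ _)
    have hx : Sum.inl x ∈ P.part (Sum.inl x) := P.mem_part (mem_univ _)
    refine mem_image.2 ⟨P.part (Sum.inl x),
      mem_filter.2 ⟨hP, ⟨x, mem_toLeft.2 hx⟩, ⟨y, mem_toRight.2 h⟩⟩, ?_⟩
    rw [toLeft_eq_part_comap_inl hP hx, toRight_eq_part_comap_inr hP h]

lemma crossingPairs_subset :
    P.crossingPairs ⊆ (P.comap Sum.inl).parts ×ˢ (P.comap Sum.inr).parts := by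
  intro p hp
  obtain ⟨x, y, -, rfl⟩ := exists_eq_of_mem_crossingPairs hp
  exact mem_product.2 ⟨(P.comap _).part_mem.2 (mem_univ x), (P.comap _).part_mem.2 (mem_univ y)⟩

lemma crossingPairs_isMatching : P.crossingPairs.IsMatching := by
  rintro _ hp _ hq h
  obtain ⟨b, hb, rfl⟩ := mem_image.1 hp
  obtain ⟨c, hc, rfl⟩ := mem_image.1 hq
  obtain ⟨hbP, ⟨x, hx⟩, ⟨y, hy⟩⟩ := mem_filter.1 hb
  rcases h with h | h
  · rw [P.eq_of_mem_parts hbP (mem_filter.1 hc).1 (mem_toLeft.1 hx)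
      (mem_toLeft.1 ((show b.toLeft = c.toLeft from h) ▸ hx))]
  · rw [P.eq_of_mem_parts hbP (mem_filter.1 hc).1 (mem_toRight.1 hy)
      (mem_toRight.1 ((show b.toRight = c.toRight from h) ▸ hy))]

end Crossing

section Glue

variable (P₁ : Finpartition (univ : Finset α)) (P₂ : Finpartition (univ : Finset β))
  (M : Finset (Finset α × Finset β))

def glueRel : α ⊕ β → α ⊕ β → Prop
  | .inl x, .inl x' => P₁.part x = P₁.part x'
  | .inr y, .inr y' => P₂.part y = P₂.part y'
  | .inl x, .inr y | .inr y, .inl x => (P₁.part x, P₂.part y) ∈ M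

instance : DecidableRel (glueRel P₁ P₂ M) := fun a b => by
  cases a <;> cases b <;> unfold glueRel <;> infer_instance

variable {M}

lemma glueRel_equivalence (hM : M.IsMatching) : Equivalence (glueRel P₁ P₂ M) where
  refl a := by cases a <;> rfl
  symm {a b} h := by cases a <;> cases b <;> first | exact h | exact h.symm
  trans {a b c} hab hbc := by
    rcases a with x | y <;> rcases b with x' | y' <;> rcases c with x'' | y'' <;>
      simp only [glueRel] at hab hbc ⊢
    · exact hab.trans hbc
    · rwa [hab]
    · exact congrArg Prod.fst (hM _ hab _ hbc (.inr rfl))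
    · rwa [← hbc]
    · rwa [← hbc]
    · exact congrArg Prod.snd (hM _ hab _ hbc (.inl rfl))
    · rwa [hab]
    · exact hab.trans hbc

def glueSetoid (hM : M.IsMatching) : Setoid (α ⊕ β) :=
  ⟨glueRel P₁ P₂ M, glueRel_equivalence P₁ P₂ hM⟩

instance (hM : M.IsMatching) : DecidableRel (glueSetoid P₁ P₂ hM) :=
  inferInstanceAs (DecidableRel (glueRel P₁ P₂ M))

def glue (hM : M.IsMatching) : Finpartition (univ : Finset (α ⊕ β)) :=
  ofSetoid (glueSetoid P₁ P₂ hM)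

variable {P₁ P₂} (hM : M.IsMatching)

lemma mem_part_glue {a b : α ⊕ β} :
    b ∈ (glue P₁ P₂ hM).part a ↔ glueRel P₁ P₂ M a b :=
  mem_part_ofSetoid_iff_rel

lemma comap_inl_glue : (glue P₁ P₂ hM).comap Sum.inl = P₁ :=
  ext_of_mem_part fun x x' => by
    rw [mem_part_comap, mem_part_glue, P₁.mem_part_iff_part_eq_part (mem_univ _) (mem_univ _),
      eq_comm]
    rfl

lemma comap_inr_glue : (glue P₁ P₂ hM).comap Sum.inr = P₂ :=
  ext_of_mem_part fun y y' => by
    rw [mem_part_comap, mem_part_glue, P₂.mem_part_iff_part_eq_part (mem_univ _) (mem_univ _),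
      eq_comm]
    rfl

lemma crossingPairs_glue (hMP : M ⊆ P₁.parts ×ˢ P₂.parts) :
    (glue P₁ P₂ hM).crossingPairs = M := by
  ext p
  constructor
  · intro hp
    obtain ⟨x, y, hxy, rfl⟩ := exists_eq_of_mem_crossingPairs hp
    rw [comap_inl_glue, comap_inr_glue]
    exact (mem_part_glue hM).1 hxy
  · intro hp
    obtain ⟨hs, ht⟩ := mem_product.1 (hMP hp)
    obtain ⟨x, hx⟩ := P₁.nonempty_of_mem_parts hs
    obtain ⟨y, hy⟩ := P₂.nonempty_of_mem_parts ht
    have hp' : p = (P₁.part x, P₂.part y) := by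
      rw [P₁.part_eq_of_mem hs hx, P₂.part_eq_of_mem ht hy]
    have hxy := mk_mem_crossingPairs_iff.2
      ((mem_part_glue hM (a := .inl x) (b := .inr y)).2 (hp' ▸ hp))
    rwa [comap_inl_glue, comap_inr_glue, ← hp'] at hxy

lemma glue_crossingPairs (P : Finpartition (univ : Finset (α ⊕ β))) :
    glue (P.comap Sum.inl) (P.comap Sum.inr) P.crossingPairs_isMatching = P := by
  refine ext_of_mem_part fun a b => ?_
  rw [mem_part_glue]
  rcases a with x | y <;> rcases b with x' | y'
  · exact part_comap_eq_part_comap_iff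
  · exact mk_mem_crossingPairs_iff
  · exact mk_mem_crossingPairs_iff.trans P.mem_part_comm
  · exact part_comap_eq_part_comap_iff

end Glue

lemma card_filter_comap_eq_card_matchings (P₁ : Finpartition (univ : Finset α))
    (P₂ : Finpartition (univ : Finset β)) (l : ℕ) :
    #{P : Finpartition (univ : Finset (α ⊕ β)) |
        #P.crossingParts = l ∧ (P.comap Sum.inl, P.comap Sum.inr) = (P₁, P₂)} =
      #(P₁.parts.matchings P₂.parts l) := by
  refine card_bij' (fun P _ => P.crossingPairs)
    (fun M hM => glue P₁ P₂ (mem_matchings.1 hM).2.2)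
    (fun P hP => ?_) (fun M hM => ?_) (fun P hP => ?_) (fun M hM => ?_)
  · obtain ⟨hl, hP₁₂⟩ := (mem_filter.1 hP).2
    obtain ⟨rfl, rfl⟩ := Prod.mk.inj hP₁₂
    exact mem_matchings.2
      ⟨crossingPairs_subset, card_crossingPairs.trans hl, crossingPairs_isMatching⟩
  · obtain ⟨hMP, hMl, hM⟩ := mem_matchings.1 hM
    refine mem_filter.2 ⟨mem_univ _, ?_, by rw [comap_inl_glue, comap_inr_glue]⟩
    rw [← card_crossingPairs, crossingPairs_glue hM hMP, hMl]
  · obtain ⟨rfl, rfl⟩ := Prod.mk.inj (mem_filter.1 hP).2.2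
    exact glue_crossingPairs P
  · exact crossingPairs_glue _ (mem_matchings.1 hM).1

theorem card_filter_card_crossingParts_eq (l : ℕ) :
    #{P : Finpartition (univ : Finset (α ⊕ β)) | #P.crossingParts = l} =
      l ! * (∑ P₁ : Finpartition (univ : Finset α), (#P₁.parts).choose l) *
        ∑ P₂ : Finpartition (univ : Finset β), (#P₂.parts).choose l := by
  rw [card_eq_sum_card_fiberwise (f := fun P => (P.comap Sum.inl, P.comap Sum.inr)) (t := univ)
    fun _ _ => mem_univ _, Fintype.sum_prod_type]
  simp only [filter_filter, card_filter_comap_eq_card_matchings, card_matchings]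
  rw [mul_assoc, sum_mul_sum, mul_sum]
  refine sum_congr rfl fun P₁ _ => ?_
  rw [mul_sum]
  exact sum_congr rfl fun P₂ _ => by ring

end Finpartition

lemma propagatingNumber_eq_card_crossingParts (r : ℕ)
    (P : Finpartition (univ : Finset (Fin r ⊕ Fin r))) :
    propagatingNumber r P = #P.crossingParts := by
  unfold propagatingNumber Finpartition.crossingParts
  congr 1
  refine filter_congr fun b _ => ?_
  simp [Finset.Nonempty, Sum.exists]

lemma stirling_eq_card_filter (r k : ℕ) :
    stirling r k = #{P : Finpartition (univ : Finset (Fin r)) | #P.parts = k} :=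
  Nat.card_eq_fintype_card.trans (Fintype.card_subtype _)

lemma sum_choose_card_parts (r l : ℕ) :
    ∑ P : Finpartition (univ : Finset (Fin r)), (#P.parts).choose l =
      ∑ k ∈ Icc l r, stirling r k * k.choose l := by
  have hmaps : ∀ P ∈ (univ : Finset (Finpartition (univ : Finset (Fin r)))),
      #P.parts ∈ range (r + 1) :=
    fun P _ => mem_range_succ_iff.2 (P.card_parts_le_card.trans_eq (card_fin r))
  calc ∑ P : Finpartition (univ : Finset (Fin r)), (#P.parts).choose l
      = ∑ k ∈ range (r + 1),
          ∑ P : Finpartition (univ : Finset (Fin r)) with #P.parts = k, (#P.parts).choose l :=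
        (sum_fiberwise_of_maps_to hmaps _).symm
    _ = ∑ k ∈ range (r + 1), stirling r k * k.choose l := by
        refine sum_congr rfl fun k _ => ?_
        rw [stirling_eq_card_filter, ← smul_eq_mul, ← sum_const]
        exact sum_congr rfl fun P hP => by rw [(mem_filter.1 hP).2]
    _ = ∑ k ∈ Icc l r, stirling r k * k.choose l := by
        refine (sum_subset (fun k hk => mem_range_succ_iff.2 (mem_Icc.1 hk).2)
          fun k hk hkIcc => ?_).symm
        rw [Nat.choose_eq_zero_of_lt, mul_zero]
        by_contra! hlk
        exact hkIcc (mem_Icc.2 ⟨hlk, mem_range_succ_iff.1 hk⟩)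

theorem card_partitions_with_propagating_number_general (r l : ℕ) :
    Nat.card {P : Finpartition (Finset.univ : Finset (Fin r ⊕ Fin r)) //
        propagatingNumber r P = l} =
      Nat.factorial l *
        (∑ k ∈ Finset.Icc l r, stirling r k * Nat.choose k l) ^ 2 := by
  rw [Nat.card_eq_fintype_card, Fintype.card_subtype]
  simp only [propagatingNumber_eq_card_crossingParts]
  rw [Finpartition.card_filter_card_crossingParts_eq, sum_choose_card_parts]
  ring

/-- For `1 ≤ r` and `l ≤ r`, the number of set partitions of the `2r`-element
set with propagating number exactly `l` is `l! · (Σ_{k=l}^{r} S(r,k)·C(k,l))²`. -/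
theorem card_partitions_with_propagating_number (r l : ℕ) (hr : 1 ≤ r) (hl : l ≤ r) :
    Nat.card {P : Finpartition (Finset.univ : Finset (Fin r ⊕ Fin r)) //
        propagatingNumber r P = l} =
      Nat.factorial l *
        (∑ k ∈ Finset.Icc l r, stirling r k * Nat.choose k l) ^ 2 :=
  card_partitions_with_propagating_number_general r l
end

section
/- For all natural numbers r ≥ 1 and 0 ≤ l < r, one has (l+1) · Σ_{k=l+1}^{r} S(r,k)·C(k,l+1) = Σ_{k=l}^{r} S(r,k)·C(k,l)·(k−l). (This is the dimension count underlying the surjectivity of the map θ in the restriction of cell modules from P_{r+1/2} to P_r.) -/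
/-! The identity holds term by term, for any coefficients in place of `S(r,k)`: it is
`(l+1)·C(k,l+1) = C(k,l)·(k−l)`, and the extra `k = l` term on the right vanishes. -/

open Finset

theorem Nat.sum_Icc_mul_choose_succ_mul (f : ℕ → ℕ) (l r : ℕ) :
    (l + 1) * ∑ k ∈ Icc (l + 1) r, f k * k.choose (l + 1) =
      ∑ k ∈ Icc l r, f k * k.choose l * (k - l) := by
  have hsub : Icc (l + 1) r ⊆ Icc l r := Icc_subset_Icc_left l.le_succ
  have hextra : ∀ k ∈ Icc l r, k ∉ Icc (l + 1) r → f k * k.choose (l + 1) = 0 := by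
    intro k hk hk'
    obtain rfl : k = l := by simp only [mem_Icc] at hk hk'; omega
    simp
  rw [sum_subset hsub hextra, mul_sum]
  refine sum_congr rfl fun k _ => ?_
  rw [mul_left_comm, mul_assoc, mul_comm (l + 1), Nat.choose_succ_right_eq]

theorem stirling_binomial_surjectivity_identity_general (r l : ℕ) :
    (l + 1) * ∑ k ∈ Finset.Icc (l + 1) r, stirling r k * Nat.choose k (l + 1) =
      ∑ k ∈ Finset.Icc l r, stirling r k * Nat.choose k l * (k - l) :=
  Nat.sum_Icc_mul_choose_succ_mul (stirling r) l r

/-- For `r ≥ 1` and `0 ≤ l < r`: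
`(l+1) · Σ_{k=l+1}^{r} S(r,k)·C(k,l+1) = Σ_{k=l}^{r} S(r,k)·C(k,l)·(k−l)`. -/
theorem stirling_binomial_surjectivity_identity (r l : ℕ) (hr : 1 ≤ r) (hl : l < r) :
    (l + 1) * ∑ k ∈ Finset.Icc (l + 1) r, stirling r k * Nat.choose k (l + 1) =
      ∑ k ∈ Finset.Icc l r, stirling r k * Nat.choose k l * (k - l) :=
  stirling_binomial_surjectivity_identity_general r l
end

section
/- A partition is uniquely determined by the multiset of contents of its boxes: if λ and μ are partitions such that the multiset {j − i : (i,j) a box of λ} equals the multiset {j − i : (i,j) a box of μ}, then λ = μ. -/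
/-- A partition: a weakly decreasing, eventually zero sequence of naturals. -/
def IsPartition (l : ℕ → ℕ) : Prop :=
  Antitone l ∧ ∃ N, ∀ i, N ≤ i → l i = 0

/-- A finite downward-closed set of naturals is an initial segment. -/
lemma mem_iff_lt_ncard_of_downclosed {T : Set ℕ} (hfin : T.Finite)
    (hdc : ∀ m n : ℕ, m ≤ n → n ∈ T → m ∈ T) (n : ℕ) :
    n ∈ T ↔ n < T.ncard := by
  constructor
  · intro hn
    have hsub : Set.Iic n ⊆ T := fun m hm => hdc m n hm hn
    have h1 := Set.ncard_le_ncard hsub hfin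
    have h2 : (Set.Iic n).ncard = n + 1 := by
      rw [show Set.Iic n = ↑(Finset.Iic n) by simp, Set.ncard_coe_finset]
      simp
    omega
  · intro hn
    by_contra hmem
    have hsub : T ⊆ Set.Iio n := by
      intro t ht
      by_contra hlt
      exact hmem (hdc n t (Nat.le_of_not_lt hlt) ht)
    have h1 := Set.ncard_le_ncard hsub (Set.finite_Iio n)
    have h2 : (Set.Iio n).ncard = n := by
      rw [show Set.Iio n = ↑(Finset.range n) by simp, Set.ncard_coe_finset]
      simp
    omega

/-- Whether a box of content `c` in row `i` exists is determined by the number of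
boxes of content `c`. -/
lemma box_iff (l : ℕ → ℕ) (hl : IsPartition l) (c : ℤ) (i : ℕ) (hi : -c ≤ (i : ℤ)) :
    (((i : ℤ) + c).toNat < l i ↔ i - (-c).toNat <
      Set.ncard {p : ℕ × ℕ | p.2 < l p.1 ∧ (p.2 : ℤ) - p.1 = c}) := by
  obtain ⟨hanti, N, hN⟩ := hl
  set a : ℕ := (-c).toNat with ha
  have hac : -c ≤ (a : ℤ) := by omega
  set T : Set ℕ := {t : ℕ | (((a + t : ℕ) : ℤ) + c).toNat < l (a + t)} with hT
  set f : ℕ → ℕ × ℕ := fun t => (a + t, (((a + t : ℕ) : ℤ) + c).toNat) with hf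
  -- T is downward closed
  have hTdc : ∀ m n : ℕ, m ≤ n → n ∈ T → m ∈ T := by
    intro m n hmn hn
    have hl' : l (a + n) ≤ l (a + m) := hanti (by omega)
    have hle : (((a + m : ℕ) : ℤ) + c).toNat ≤ (((a + n : ℕ) : ℤ) + c).toNat := by
      push_cast; omega
    simp only [hT, Set.mem_setOf_eq] at hn ⊢
    omega
  -- T is finite
  have hTfin : T.Finite := by
    apply Set.Finite.subset (Set.finite_Iio N)
    intro t ht
    simp only [hT, Set.mem_setOf_eq] at ht
    simp only [Set.mem_Iio]
    by_contra hlt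
    push_neg at hlt
    have : N ≤ a + t := by omega
    rw [hN _ this] at ht
    omega
  -- the diagonal set is the image of T
  have hST : {p : ℕ × ℕ | p.2 < l p.1 ∧ (p.2 : ℤ) - p.1 = c} = f '' T := by
    ext p
    constructor
    · rintro ⟨hp1, hp2⟩
      have hpa : a ≤ p.1 := by omega
      refine ⟨p.1 - a, ?_, ?_⟩
      · have h1 : a + (p.1 - a) = p.1 := by omega
        simp only [hT, Set.mem_setOf_eq, h1]
        have h2 : (((p.1 : ℕ) : ℤ) + c).toNat = p.2 := by omega
        rw [h2]; exact hp1
      · have h1 : a + (p.1 - a) = p.1 := by omega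
        simp only [hf, h1]
        have h2 : (((p.1 : ℕ) : ℤ) + c).toNat = p.2 := by omega
        rw [h2]
    · rintro ⟨t, ht, rfl⟩
      simp only [hT, Set.mem_setOf_eq] at ht
      refine ⟨ht, ?_⟩
      simp only [hf]
      push_cast
      omega
  have hinj : Function.Injective f := by
    intro s t hst
    have := congrArg Prod.fst hst
    simp only [hf] at this
    omega
  have hcard : Set.ncard {p : ℕ × ℕ | p.2 < l p.1 ∧ (p.2 : ℤ) - p.1 = c} = T.ncard := by
    rw [hST, Set.ncard_image_of_injective _ hinj]
  rw [hcard]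
  have hia : a ≤ i := by omega
  have h1 : a + (i - a) = i := by omega
  rw [← mem_iff_lt_ncard_of_downclosed hTfin hTdc (i - a)]
  simp only [hT, Set.mem_setOf_eq, h1]

/-- A partition is determined by the multiset of contents of its boxes:
if for every `c : ℤ` the number of boxes `(i,j)` (0-indexed, `j < λ_i`) of
content `j − i = c` agrees for `λ` and `μ`, then `λ = μ`. -/
theorem partition_determined_by_contents (lam mu : ℕ → ℕ)
    (hlam : IsPartition lam) (hmu : IsPartition mu)
    (h : ∀ c : ℤ,
      Set.ncard {p : ℕ × ℕ | p.2 < lam p.1 ∧ (p.2 : ℤ) - p.1 = c} =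
        Set.ncard {p : ℕ × ℕ | p.2 < mu p.1 ∧ (p.2 : ℤ) - p.1 = c}) :
    lam = mu := by
  funext i
  have key : ∀ m : ℕ, (m < lam i ↔ m < mu i) := by
    intro m
    set c : ℤ := (m : ℤ) - i with hc
    have hi : -c ≤ (i : ℤ) := by omega
    have hm : ((i : ℤ) + c).toNat = m := by omega
    have h1 := box_iff lam hlam c i hi
    have h2 := box_iff mu hmu c i hi
    rw [hm] at h1 h2
    rw [h1, h2, h c]
  have h1 := key (lam i)
  have h2 := key (mu i)
  omega
end

section
/- For every natural number r ≥ 1, the number of vacillating tableaux of shape ∅ and length r equals the Bell number B(r). Here a vacillating tableau of shape λ and length r is a sequence (t_0, t_1, …, t_{2r−1}) of partitions with t_0 = ∅ and t_{2r−1} = λ such that for each odd index m the partition t_m is obtained from t_{m−1} either by adding one box or leaving it unchanged, and for each even index m ≥ 2 the partition t_m is obtained from t_{m−1} either by removing one box or leaving it unchanged. -/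
/-- The result of adding a box to row `i` (0-indexed). -/
def addRow (l : ℕ → ℕ) (i : ℕ) : ℕ → ℕ := Function.update l i (l i + 1)

/-- The number of boxes of a partition. -/
noncomputable def psize (l : ℕ → ℕ) : ℕ := Set.ncard {p : ℕ × ℕ | p.2 < l p.1}

/-- A vacillating tableau of shape `lam` and length `r`: a sequence
`t 0 = ∅, t 1, …, t (2r−1) = lam` of partitions such that at each odd index a
box is added or nothing changes, and at each even index `≥ 2` a box is removed
or nothing changes.  (Entries of the sequence beyond index `2r−1` are
normalized to the empty partition.) -/
def IsVacTab (r : ℕ) (t : ℕ → ℕ → ℕ) (lam : ℕ → ℕ) : Prop :=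
  (∀ m, m < 2 * r → IsPartition (t m)) ∧
  t 0 = (fun _ => 0) ∧
  t (2 * r - 1) = lam ∧
  (∀ m, m < 2 * r → m % 2 = 1 →
    (t m = t (m - 1) ∨ ∃ i, t m = addRow (t (m - 1)) i)) ∧
  (∀ m, 2 ≤ m → m < 2 * r → m % 2 = 0 →
    (t m = t (m - 1) ∨ ∃ i, t (m - 1) = addRow (t m) i)) ∧
  (∀ m, 2 * r ≤ m → t m = fun _ => 0)

/-- `w` is the weight vector of the vacillating tableau `t` (with parameter `δ`):
at an odd step `m`, `w m` is the content of the added box, or `δ − |t m|` if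
nothing changed; at an even step `m ≥ 2`, `w m` is `δ` minus the content of the
removed box, or `|t m|` if nothing changed. -/
def HasWeight (δ : ℤ) (r : ℕ) (t : ℕ → ℕ → ℕ) (w : ℕ → ℤ) : Prop :=
  ∀ m, 1 ≤ m → m < 2 * r →
    (m % 2 = 1 →
      ((t m = t (m - 1) ∧ w m = δ - psize (t m)) ∨
        ∃ i, t m = addRow (t (m - 1)) i ∧ w m = (t (m - 1) i : ℤ) - i)) ∧
    (m % 2 = 0 →
      ((t m = t (m - 1) ∧ w m = (psize (t m) : ℤ)) ∨
        ∃ i, t (m - 1) = addRow (t m) i ∧ w m = δ - ((t m i : ℤ) - i)))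

/-!
A vacillating tableau is a walk in Young's lattice that alternately may add and may remove a box.
Young's lattice is differential: for the operators `U`, `D` adding and removing a box,
`DU = UD + 1`. Hence words in `1 + U` and `1 + D` act on `∅` as in the Weyl algebra acting on
`ℕ[X]` by `U = X ·` and `D = d/dX`. Precisely, the number of walks of length `k` from `∅` to `λ`
is `∑ₐ cₐ fₐ(λ)`, where `fₐ(λ)` counts the chains of `a` box removals from `λ` down to `∅` and
`∑ₐ cₐ Xᵃ = vacPoly k` is obtained from `1` by applying alternately `X + 1` and `1 + d/dX`.
For `λ = ∅` only `c₀` survives.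

The polynomials `Tₙ = ∑_P (X + 1) ^ #P.parts`, summed over the set partitions `P` of an
`n`-element set, obey the same recursion `Tₙ₊₁ = (X + 1)(Tₙ + Tₙ')`, since a new element either
forms a block of its own or joins one of the `#P.parts` blocks. So `vacPoly (2r - 1) = Tᵣ`,
and `Tᵣ(0) = B(r)`.
-/

open Finset Polynomial

section Walk

variable {α : Type*} (R : ℕ → α → α → Prop) (a₀ : α)

def IsWalk (k : ℕ) (t : ℕ → α) (x : α) : Prop :=
  t 0 = a₀ ∧ t k = x ∧ (∀ m < k, R (m + 1) (t m) (t (m + 1))) ∧ ∀ m, k < m → t m = a₀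

variable {R a₀}

lemma IsWalk.eq_const_of_zero {t : ℕ → α} {x : α} (ht : IsWalk R a₀ 0 t x) : t = fun _ => a₀ :=
  funext fun m => m.eq_zero_or_pos.elim (fun hm => hm ▸ ht.1) (ht.2.2.2 m)

open scoped Classical in
lemma card_isWalk_zero (x : α) : Nat.card {t // IsWalk R a₀ 0 t x} = if x = a₀ then 1 else 0 := by
  split_ifs with hx
  · subst hx
    refine Nat.card_eq_one_iff_unique.2 ⟨⟨fun t t' => Subtype.ext ?_⟩, ⟨⟨fun _ => x, ?_⟩⟩⟩
    · rw [t.2.eq_const_of_zero, t'.2.eq_const_of_zero]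
    · exact ⟨rfl, rfl, fun m hm => absurd hm (Nat.not_lt_zero m), fun _ _ => rfl⟩
  · have : IsEmpty {t // IsWalk R a₀ 0 t x} := ⟨fun t => hx (t.2.2.1.symm.trans t.2.1)⟩
    exact Nat.card_of_isEmpty

lemma IsWalk.last_step {k : ℕ} {t : ℕ → α} {x : α} (ht : IsWalk R a₀ (k + 1) t x) :
    R (k + 1) (t k) x :=
  ht.2.1 ▸ ht.2.2.1 k k.lt_succ_self

lemma IsWalk.truncate {k : ℕ} {t : ℕ → α} {x : α} (ht : IsWalk R a₀ (k + 1) t x) :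
    IsWalk R a₀ k (fun m => if m ≤ k then t m else a₀) (t k) := by
  obtain ⟨h0, -, hstep, -⟩ := ht
  refine ⟨by simpa using h0, by simp, fun m hm => ?_, fun m hm => if_neg (by omega)⟩
  simp only [if_pos hm.le, if_pos (Nat.succ_le_of_lt hm)]
  exact hstep m (by omega)

lemma IsWalk.snoc {k : ℕ} {u : ℕ → α} {x y : α} (hu : IsWalk R a₀ k u y) (hxy : R (k + 1) y x) :
    IsWalk R a₀ (k + 1) (Function.update u (k + 1) x) x := by
  obtain ⟨h0, hy, hstep, hlast⟩ := hu
  refine ⟨by simpa using h0, by simp, fun m hm => ?_, fun m hm => ?_⟩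
  · rcases Nat.lt_succ_iff_lt_or_eq.1 hm with hm | rfl
    · rw [Function.update_of_ne (by omega), Function.update_of_ne (by omega)]
      exact hstep m hm
    · rw [Function.update_of_ne (by omega), Function.update_self, hy]
      exact hxy
  · rw [Function.update_of_ne (by omega)]
    exact hlast m (by omega)

def isWalkSuccFiberEquiv {k : ℕ} {x y : α} (hxy : R (k + 1) y x) :
    {t : {t // IsWalk R a₀ (k + 1) t x} // t.1 k = y} ≃ {t // IsWalk R a₀ k t y} where
  toFun t := ⟨_, t.2 ▸ t.1.2.truncate⟩
  invFun u := ⟨⟨_, u.2.snoc hxy⟩, by simpa using u.2.2.1⟩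
  left_inv := by
    rintro ⟨⟨t, ht⟩, -⟩
    ext m
    simp only [Function.update_apply]
    split_ifs with h1 h2 <;>
      first | rfl | omega | (subst h1; exact ht.2.1.symm) | exact (ht.2.2.2 m (by omega)).symm
  right_inv := by
    rintro ⟨u, hu⟩
    ext m
    simp only [Function.update_apply]
    split_ifs <;> first | rfl | omega | exact (hu.2.2.2 m (by omega)).symm

lemma finite_isWalk (hR : ∀ k x, {y | R (k + 1) y x}.Finite) (k : ℕ) (x : α) :
    Finite {t // IsWalk R a₀ k t x} := by
  induction k generalizing x with
  | zero =>
    have : Subsingleton {t // IsWalk R a₀ 0 t x} :=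
      ⟨fun t t' => Subtype.ext (t.2.eq_const_of_zero.trans t'.2.eq_const_of_zero.symm)⟩
    infer_instance
  | succ k ih =>
    have : Finite {y // R (k + 1) y x} := (hR k x).to_subtype
    have (y : {y // R (k + 1) y x}) : Finite {t : {t // IsWalk R a₀ (k + 1) t x} // t.1 k = y} :=
      .of_equiv _ (isWalkSuccFiberEquiv y.2).symm
    exact .of_equiv _ (Equiv.sigmaSubtypeFiberEquiv (fun t => t.1 k) (fun y => R (k + 1) y x)
      fun t => t.2.last_step)

lemma card_isWalk_succ {k : ℕ} [∀ y, Finite {t // IsWalk R a₀ k t y}] {x : α} (S : Finset α)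
    (hS : ∀ y, y ∈ S ↔ R (k + 1) y x) :
    Nat.card {t // IsWalk R a₀ (k + 1) t x} = ∑ y ∈ S, Nat.card {t // IsWalk R a₀ k t y} := by
  have hmem (t : {t // IsWalk R a₀ (k + 1) t x}) : t.1 k ∈ S :=
    (hS _).2 t.2.last_step
  have (y : S) : Finite {t : {t // IsWalk R a₀ (k + 1) t x} // t.1 k = y} :=
    .of_equiv _ (isWalkSuccFiberEquiv ((hS y).1 y.2)).symm
  rw [← Nat.card_congr (Equiv.sigmaSubtypeFiberEquiv (fun t => t.1 k) (· ∈ S) hmem),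
    Nat.card_sigma, ← sum_coe_sort S]
  exact sum_congr rfl fun y _ => Nat.card_congr (isWalkSuccFiberEquiv ((hS y).1 y.2))

end Walk

def removeRow (l : ℕ → ℕ) (j : ℕ) : ℕ → ℕ := Function.update l j (l j - 1)

section YoungLattice

variable {l : ℕ → ℕ} {i j : ℕ}

lemma isPartition_zero : IsPartition 0 := ⟨antitone_const, 0, fun _ _ => rfl⟩

lemma addRow_ne_self (l : ℕ → ℕ) (i : ℕ) : addRow l i ≠ l := fun h => by
  simpa [addRow] using congrFun h i

lemma addRow_ne_zero (l : ℕ → ℕ) (i : ℕ) : addRow l i ≠ 0 := fun h => by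
  simpa [addRow] using congrFun h i

lemma addRow_injective (l : ℕ → ℕ) : Function.Injective (addRow l) := fun i i' h => by
  by_contra hne
  simpa [addRow, hne] using congrFun h i

lemma removeRow_addRow (l : ℕ → ℕ) (i : ℕ) : removeRow (addRow l i) i = l := by
  simp [removeRow, addRow]

lemma addRow_removeRow (h : 0 < l j) : addRow (removeRow l j) j = l := by
  simp only [addRow, removeRow, Function.update_self, Function.update_idem]
  rw [Nat.sub_add_cancel h, Function.update_eq_self]

lemma removeRow_ne_self (h : 0 < l j) : removeRow l j ≠ l := fun h' => by
  have := congrFun h' j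
  simp [removeRow] at this
  omega

lemma eq_of_removeRow_eq {j j' : ℕ} (hj : 0 < l j) (h : removeRow l j = removeRow l j') :
    j = j' := by
  by_contra hne
  have := congrFun h j
  simp [removeRow, Function.update_of_ne hne] at this
  omega

lemma removeRow_addRow_comm (l : ℕ → ℕ) (h : i ≠ j) :
    removeRow (addRow l i) j = addRow (removeRow l j) i := by
  simp only [removeRow, addRow, Function.update_apply, if_neg h, if_neg h.symm]
  exact Function.update_comm h _ _ l

lemma IsPartition.succ_le (hl : IsPartition l) (n : ℕ) : l (n + 1) ≤ l n := hl.1 n.le_succ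

lemma IsPartition.isPartition_update_iff (hl : IsPartition l) (i v : ℕ) :
    IsPartition (Function.update l i v) ↔ l (i + 1) ≤ v ∧ (i = 0 ∨ v ≤ l (i - 1)) := by
  constructor
  · intro h
    have h1 := h.succ_le i
    rw [Function.update_self, Function.update_of_ne (by omega)] at h1
    refine ⟨h1, or_iff_not_imp_left.2 fun hi => ?_⟩
    have h2 := h.succ_le (i - 1)
    rwa [Nat.sub_add_cancel (Nat.pos_of_ne_zero hi), Function.update_self,
      Function.update_of_ne (by omega)] at h2
  · rintro ⟨h1, h2⟩
    obtain ⟨N, hN⟩ := hl.2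
    refine ⟨antitone_nat_of_succ_le fun n => ?_, N + i + 1, fun n hn => ?_⟩
    · have := hl.succ_le n
      simp only [Function.update_apply]
      split_ifs with ha hb hb <;> first | omega | (subst_vars; simp_all)
    · rw [Function.update_of_ne (by omega)]
      exact hN n (by omega)

lemma IsPartition.finite_setOf_lt (hl : IsPartition l) : {j | l (j + 1) < l j}.Finite := by
  obtain ⟨N, hN⟩ := hl.2
  refine (Set.finite_Iio N).subset fun j hj => ?_
  by_contra h
  have := hN j (not_lt.1 h)
  simp at hj
  omega

open scoped Classical in
noncomputable def removableRows (l : ℕ → ℕ) : Finset ℕ :=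
  if h : {j | l (j + 1) < l j}.Finite then h.toFinset else ∅

noncomputable def addableRows (l : ℕ → ℕ) : Finset ℕ :=
  insert 0 ((removableRows l).image (· + 1))

lemma mem_removableRows (hl : IsPartition l) : j ∈ removableRows l ↔ l (j + 1) < l j := by
  simp [removableRows, dif_pos hl.finite_setOf_lt]

lemma mem_addableRows (hl : IsPartition l) : i ∈ addableRows l ↔ i = 0 ∨ l i < l (i - 1) := by
  simp only [addableRows, mem_insert, mem_image, mem_removableRows hl]
  constructor
  · rintro (h | ⟨j, hj, rfl⟩)
    · exact Or.inl h
    · exact Or.inr hj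
  · rintro (h | h)
    · exact Or.inl h
    · rcases i with _ | j
      · exact Or.inl rfl
      · exact Or.inr ⟨j, h, rfl⟩

lemma card_addableRows (l : ℕ → ℕ) : #(addableRows l) = #(removableRows l) + 1 := by
  rw [addableRows, card_insert_of_notMem (by simp),
    card_image_of_injective _ (add_left_injective 1)]

lemma removableRows_zero : removableRows 0 = ∅ := by
  ext j
  simp [mem_removableRows isPartition_zero]

lemma pos_of_mem_removableRows (hl : IsPartition l) (hj : j ∈ removableRows l) : 0 < l j := by
  have := (mem_removableRows hl).1 hj
  omega

lemma IsPartition.isPartition_addRow_iff (hl : IsPartition l) :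
    IsPartition (addRow l i) ↔ i ∈ addableRows l := by
  rw [addRow, hl.isPartition_update_iff, mem_addableRows hl]
  have := hl.succ_le i
  constructor
  · rintro ⟨-, h | h⟩ <;> [exact Or.inl h; exact Or.inr (by omega)]
  · rintro (h | h) <;> [exact ⟨by omega, Or.inl h⟩; exact ⟨by omega, Or.inr (by omega)⟩]

lemma IsPartition.isPartition_removeRow (hl : IsPartition l) (hj : j ∈ removableRows l) :
    IsPartition (removeRow l j) := by
  rw [mem_removableRows hl] at hj
  have := hl.1 (j.sub_le 1)
  rw [removeRow, hl.isPartition_update_iff]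
  omega

lemma IsPartition.mem_removableRows_addRow (hl : IsPartition l) (hi : i ∈ addableRows l) :
    i ∈ removableRows (addRow l i) := by
  rw [mem_removableRows (hl.isPartition_addRow_iff.2 hi), addRow, Function.update_self,
    Function.update_of_ne (by omega)]
  exact Nat.lt_succ_of_le (hl.succ_le i)

lemma IsPartition.mem_addableRows_removeRow (hl : IsPartition l) (hj : j ∈ removableRows l) :
    j ∈ addableRows (removeRow l j) := by
  rw [← (hl.isPartition_removeRow hj).isPartition_addRow_iff,
    addRow_removeRow (pos_of_mem_removableRows hl hj)]
  exact hl

lemma IsPartition.mem_addableRows_and_mem_removableRows_addRow_iff (hl : IsPartition l)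
    (h : i ≠ j) : i ∈ addableRows l ∧ j ∈ removableRows (addRow l i) ↔
      i ∈ addableRows (removeRow l j) ∧ j ∈ removableRows l := by
  have key : (i = 0 ∨ l i < l (i - 1)) ∧ addRow l i (j + 1) < addRow l i j ↔
      (i = 0 ∨ removeRow l j i < removeRow l j (i - 1)) ∧ l (j + 1) < l j := by
    have h1 := hl.succ_le i
    have h2 := hl.succ_le j
    have h3 := hl.succ_le (i - 1)
    have h4 := hl.succ_le (j + 1)
    simp only [addRow, removeRow, Function.update_apply]
    rcases i with _ | i
    · have hj : j ≠ 0 := fun hj => h hj.symm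
      simp [hj]
    · split_ifs <;> simp_all
      omega
  constructor
  · rintro ⟨hi, hj⟩
    rw [mem_addableRows hl] at hi
    rw [mem_removableRows (hl.isPartition_addRow_iff.2 ((mem_addableRows hl).2 hi))] at hj
    obtain ⟨hi', hj'⟩ := key.1 ⟨hi, hj⟩
    have hjR := (mem_removableRows hl).2 hj'
    exact ⟨(mem_addableRows (hl.isPartition_removeRow hjR)).2 hi', hjR⟩
  · rintro ⟨hi, hj⟩
    rw [mem_removableRows hl] at hj
    rw [mem_addableRows (hl.isPartition_removeRow ((mem_removableRows hl).2 hj))] at hi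
    obtain ⟨hi', hj'⟩ := key.2 ⟨hi, hj⟩
    have hiA := (mem_addableRows hl).2 hi'
    exact ⟨hiA, (mem_removableRows (hl.isPartition_addRow_iff.2 hiA)).2 hj'⟩

/-- Young's lattice is a differential poset: `DU = UD + 1`. -/
lemma IsPartition.sum_addableRows_removableRows {M : Type*} [AddCommMonoid M]
    (hl : IsPartition l) (g : (ℕ → ℕ) → M) :
    ∑ i ∈ addableRows l, ∑ j ∈ removableRows (addRow l i), g (removeRow (addRow l i) j) =
      ∑ j ∈ removableRows l, ∑ i ∈ addableRows (removeRow l j), g (addRow (removeRow l j) i)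
        + g l := by
  have off_diag : ∑ i ∈ addableRows l, ∑ j ∈ (removableRows (addRow l i)).erase i,
        g (removeRow (addRow l i) j) =
      ∑ j ∈ removableRows l, ∑ i ∈ (addableRows (removeRow l j)).erase j,
        g (addRow (removeRow l j) i) := by
    calc _ = ∑ i ∈ addableRows l, ∑ j ∈ (removableRows (addRow l i)).erase i,
          g (addRow (removeRow l j) i) :=
          sum_congr rfl fun i _ => sum_congr rfl fun j hj => by
            rw [removeRow_addRow_comm l (ne_of_mem_erase hj).symm]
      _ = _ := sum_comm' fun i j => by
          rcases eq_or_ne i j with rfl | hij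
          · simp
          · simpa [mem_erase, hij, hij.symm] using
              hl.mem_addableRows_and_mem_removableRows_addRow_iff hij
  calc _ = ∑ i ∈ addableRows l, (∑ j ∈ (removableRows (addRow l i)).erase i,
        g (removeRow (addRow l i) j) + g l) := by
        refine sum_congr rfl fun i hi => ?_
        rw [← sum_erase_add _ _ (hl.mem_removableRows_addRow hi), removeRow_addRow]
    _ = ∑ j ∈ removableRows l, (∑ i ∈ (addableRows (removeRow l j)).erase j,
        g (addRow (removeRow l j) i) + g l) + g l := by
        rw [sum_add_distrib, sum_add_distrib, off_diag, sum_const, sum_const, card_addableRows,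
          succ_nsmul, add_assoc]
    _ = _ := by
        congr 1
        refine sum_congr rfl fun j hj => ?_
        rw [← sum_erase_add _ _ (hl.mem_addableRows_removeRow hj),
          addRow_removeRow (pos_of_mem_removableRows hl hj)]

end YoungLattice

open scoped Classical in
noncomputable def numDownPaths : ℕ → (ℕ → ℕ) → ℕ
  | 0, l => if l = 0 then 1 else 0
  | a + 1, l => ∑ j ∈ removableRows l, numDownPaths a (removeRow l j)

section DownPaths
variable {l : ℕ → ℕ}

lemma numDownPaths_succ (a : ℕ) (l : ℕ → ℕ) :
    numDownPaths (a + 1) l = ∑ j ∈ removableRows l, numDownPaths a (removeRow l j) := rfl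

lemma numDownPaths_zero_addRow (l : ℕ → ℕ) (i : ℕ) : numDownPaths 0 (addRow l i) = 0 := by
  simp [numDownPaths, addRow_ne_zero]

lemma numDownPaths_zero_right (a : ℕ) : numDownPaths a 0 = if a = 0 then 1 else 0 := by
  cases a <;> simp [numDownPaths, removableRows_zero]

lemma IsPartition.sum_numDownPaths_addRow (hl : IsPartition l) (a : ℕ) :
    ∑ i ∈ addableRows l, numDownPaths (a + 1) (addRow l i) = (a + 1) * numDownPaths a l := by
  induction a generalizing l with
  | zero =>
    simp only [numDownPaths_succ]
    rw [hl.sum_addableRows_removableRows (numDownPaths 0)]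
    simp [numDownPaths_zero_addRow]
  | succ a ih =>
    simp only [numDownPaths_succ (a + 1)]
    rw [hl.sum_addableRows_removableRows (numDownPaths (a + 1)),
      sum_congr rfl fun j hj => ih (hl.isPartition_removeRow hj), ← mul_sum, ← numDownPaths_succ]
    ring

/-- `Xᵃ ↦ numDownPaths a l`, extended linearly. -/
noncomputable def downPathPairing (l : ℕ → ℕ) : ℕ[X] →ₗ[ℕ] ℕ :=
  lsum fun a => numDownPaths a l • LinearMap.id

lemma downPathPairing_monomial (l : ℕ → ℕ) (a c : ℕ) :
    downPathPairing l (monomial a c) = c * numDownPaths a l := by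
  simp [downPathPairing, mul_comm]

lemma downPathPairing_one (l : ℕ → ℕ) : downPathPairing l 1 = numDownPaths 0 l := by
  simpa using downPathPairing_monomial l 0 1

lemma downPathPairing_zero_apply (p : ℕ[X]) : downPathPairing 0 p = p.coeff 0 := by
  induction p using Polynomial.induction_on' with
  | add p q hp hq => simp [hp, hq]
  | monomial a c => simp [downPathPairing_monomial, numDownPaths_zero_right, coeff_monomial]

lemma downPathPairing_X_mul (l : ℕ → ℕ) (p : ℕ[X]) :
    downPathPairing l (X * p) = ∑ j ∈ removableRows l, downPathPairing (removeRow l j) p := by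
  induction p using Polynomial.induction_on' with
  | add p q hp hq => simp [mul_add, hp, hq, sum_add_distrib]
  | monomial a c => simp [X_mul_monomial, downPathPairing_monomial, numDownPaths, mul_sum]

lemma IsPartition.downPathPairing_derivative (hl : IsPartition l) (p : ℕ[X]) :
    downPathPairing l (derivative p) = ∑ i ∈ addableRows l, downPathPairing (addRow l i) p := by
  induction p using Polynomial.induction_on' with
  | add p q hp hq => simp [hp, hq, sum_add_distrib]
  | monomial a c =>
    rw [derivative_monomial]
    simp only [downPathPairing_monomial, ← mul_sum]
    rcases a with _ | a
    · simp [numDownPaths_zero_addRow]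
    · rw [hl.sum_numDownPaths_addRow]
      push_cast
      ring

end DownPaths

def vacStep (m : ℕ) (μ ν : ℕ → ℕ) : Prop :=
  IsPartition μ ∧ IsPartition ν ∧
    if m % 2 = 1 then ν = μ ∨ ∃ i, ν = addRow μ i else ν = μ ∨ ∃ i, μ = addRow ν i

lemma isVacTab_iff_isWalk (r : ℕ) (t : ℕ → ℕ → ℕ) (lam : ℕ → ℕ) :
    IsVacTab r t lam ↔ IsWalk vacStep 0 (2 * r - 1) t lam := by
  constructor
  · rintro ⟨hpart, h0, hlast, hodd, heven, hpad⟩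
    refine ⟨h0, hlast, fun m hm => ⟨hpart m (by omega), hpart (m + 1) (by omega), ?_⟩,
      fun m hm => hpad m (by omega)⟩
    split_ifs with hpar
    · exact hodd (m + 1) (by omega) hpar
    · exact heven (m + 1) (by omega) (by omega) (by omega)
  · rintro ⟨h0, hlast, hstep, hpad⟩
    have hpart : ∀ m < 2 * r, IsPartition (t m) := fun m hm => by
      rcases m with _ | m
      · exact h0 ▸ isPartition_zero
      · exact (hstep m (by omega)).2.1
    refine ⟨hpart, h0, hlast, fun m hm hpar => ?_, fun m h2 hm hpar => ?_, fun m hm => ?_⟩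
    · obtain ⟨m, rfl⟩ : ∃ n, m = n + 1 := ⟨m - 1, by omega⟩
      simpa [hpar] using (hstep m (by omega)).2.2
    · obtain ⟨m, rfl⟩ : ∃ n, m = n + 1 := ⟨m - 1, by omega⟩
      simpa [show (m + 1) % 2 ≠ 1 by omega] using (hstep m (by omega)).2.2
    · rcases m.eq_zero_or_pos with rfl | hm0
      · exact h0
      · exact hpad m (by omega)

open scoped Classical in
noncomputable def vacPred (m : ℕ) (ν : ℕ → ℕ) : Finset (ℕ → ℕ) :=
  insert ν (if m % 2 = 1 then (removableRows ν).image (removeRow ν)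
    else (addableRows ν).image (addRow ν))

lemma vacStep_iff (m : ℕ) (μ ν : ℕ → ℕ) : vacStep m μ ν ↔ IsPartition ν ∧ μ ∈ vacPred m ν := by
  unfold vacStep vacPred
  split_ifs
  · simp only [mem_insert, mem_image]
    constructor
    · rintro ⟨hμ, hν, rfl | ⟨i, rfl⟩⟩
      · exact ⟨hν, Or.inl rfl⟩
      · exact ⟨hν, Or.inr ⟨i, hμ.mem_removableRows_addRow (hμ.isPartition_addRow_iff.1 hν),
          removeRow_addRow μ i⟩⟩
    · rintro ⟨hν, rfl | ⟨j, hj, rfl⟩⟩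
      · exact ⟨hν, hν, Or.inl rfl⟩
      · exact ⟨hν.isPartition_removeRow hj, hν,
          Or.inr ⟨j, (addRow_removeRow (pos_of_mem_removableRows hν hj)).symm⟩⟩
  · simp only [mem_insert, mem_image]
    constructor
    · rintro ⟨hμ, hν, rfl | ⟨i, rfl⟩⟩
      · exact ⟨hν, Or.inl rfl⟩
      · exact ⟨hν, Or.inr ⟨i, hν.isPartition_addRow_iff.1 hμ, rfl⟩⟩
    · rintro ⟨hν, rfl | ⟨i, hi, rfl⟩⟩
      · exact ⟨hν, hν, Or.inl rfl⟩
      · exact ⟨hν.isPartition_addRow_iff.2 hi, hν, Or.inr ⟨i, rfl⟩⟩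

lemma sum_vacPred_of_odd {M : Type*} [AddCommMonoid M] {m : ℕ} {ν : ℕ → ℕ}
    (hν : IsPartition ν) (hm : m % 2 = 1) (g : (ℕ → ℕ) → M) :
    ∑ μ ∈ vacPred m ν, g μ = g ν + ∑ j ∈ removableRows ν, g (removeRow ν j) := by
  classical
  have hpos : ∀ j ∈ removableRows ν, 0 < ν j := fun j => pos_of_mem_removableRows hν
  rw [vacPred, if_pos hm, sum_insert, sum_image fun j hj _ _ => eq_of_removeRow_eq (hpos j hj)]
  simpa using fun j hj => removeRow_ne_self (hpos j hj)

lemma sum_vacPred_of_even {M : Type*} [AddCommMonoid M] {m : ℕ} {ν : ℕ → ℕ}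
    (hm : m % 2 = 0) (g : (ℕ → ℕ) → M) :
    ∑ μ ∈ vacPred m ν, g μ = g ν + ∑ i ∈ addableRows ν, g (addRow ν i) := by
  classical
  rw [vacPred, if_neg (by omega), sum_insert, sum_image (addRow_injective ν).injOn]
  simpa using fun i _ => addRow_ne_self ν i

noncomputable def vacPoly : ℕ → ℕ[X]
  | 0 => 1
  | k + 1 => if (k + 1) % 2 = 1 then (X + 1) * vacPoly k else vacPoly k + derivative (vacPoly k)

lemma vacPoly_two_mul (n : ℕ) :
    vacPoly (2 * n) = vacPoly (2 * n - 1) + derivative (vacPoly (2 * n - 1)) := by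
  rcases n with _ | n
  · simp [vacPoly]
  · rw [show 2 * (n + 1) = 2 * n + 1 + 1 by ring, vacPoly, if_neg (by omega)]
    rfl

lemma vacPoly_two_mul_add_one (n : ℕ) : vacPoly (2 * n + 1) = (X + 1) * vacPoly (2 * n) := by
  rw [vacPoly, if_pos (by omega)]

lemma finite_isWalk_vacStep (k : ℕ) (l : ℕ → ℕ) : Finite {t // IsWalk vacStep 0 k t l} :=
  finite_isWalk (R := vacStep) (fun k ν => (vacPred (k + 1) ν).finite_toSet.subset fun μ hμ =>
    ((vacStep_iff _ μ ν).1 hμ).2) k l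

theorem card_isWalk_vacStep (k : ℕ) {l : ℕ → ℕ} (hl : IsPartition l) :
    Nat.card {t // IsWalk vacStep 0 k t l} = downPathPairing l (vacPoly k) := by
  induction k generalizing l with
  | zero => rw [card_isWalk_zero, vacPoly, downPathPairing_one, numDownPaths]
  | succ k ih =>
    have := finite_isWalk_vacStep k
    rw [card_isWalk_succ (vacPred (k + 1) l)
      fun μ => ((vacStep_iff _ μ l).trans (and_iff_right hl)).symm, vacPoly]
    split_ifs with hk
    · rw [sum_vacPred_of_odd hl hk, ih hl,
        sum_congr rfl fun j hj => ih (hl.isPartition_removeRow hj), add_one_mul, map_add,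
        downPathPairing_X_mul, add_comm]
    · rw [sum_vacPred_of_even (by omega), ih hl,
        sum_congr rfl fun i hi => ih (hl.isPartition_addRow_iff.2 hi), map_add,
        hl.downPathPairing_derivative]

namespace Finpartition

variable {α : Type*} [DecidableEq α] {s : Finset α} {b : α}

lemma mem_restrict_parts {P : Finpartition s} {t : Finset α} (h : t ⊆ s) {C : Finset α} :
    C ∈ (P.restrict h).parts ↔ C.Nonempty ∧ ∃ D ∈ P.parts, D ∩ t = C := by
  simp [restrict, ← nonempty_iff_ne_empty, and_comm]

def insertSingleton (hb : b ∉ s) (P : Finpartition s) : Finpartition (insert b s) :=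
  P.extend (singleton_ne_empty b) (disjoint_singleton_right.2 hb) (by
    rw [sup_eq_union, union_comm, ← insert_eq])

def insertIntoPart (hb : b ∉ s) (P : Finpartition s) {B : Finset α} (hB : B ∈ P.parts) :
    Finpartition (insert b s) where
  parts := insert (insert b B) (P.parts.erase B)
  supIndep := by
    rw [supIndep_iff_pairwiseDisjoint, coe_insert, coe_erase]
    refine (P.disjoint.subset Set.sdiff_subset).insert fun C ⟨hC, hCB⟩ _ => ?_
    exact disjoint_insert_left.2 ⟨fun h => hb (P.le hC h), P.disjoint hB hC (Ne.symm hCB)⟩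
  sup_parts := by
    have h := P.sup_parts
    rw [← insert_erase hB, sup_insert] at h
    simp only [sup_insert, id, sup_eq_union] at h ⊢
    rw [insert_union, h]
  bot_notMem := by
    rw [bot_eq_empty, mem_insert, not_or]
    exact ⟨(insert_ne_empty b B).symm, fun h => P.bot_notMem (mem_of_mem_erase h)⟩

lemma parts_insertSingleton (hb : b ∉ s) (P : Finpartition s) :
    (P.insertSingleton hb).parts = insert {b} P.parts := rfl

lemma parts_insertIntoPart (hb : b ∉ s) (P : Finpartition s) {B : Finset α} (hB : B ∈ P.parts) :
    (P.insertIntoPart hb hB).parts = insert (insert b B) (P.parts.erase B) := rfl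

lemma card_parts_insertSingleton (hb : b ∉ s) (P : Finpartition s) :
    #(P.insertSingleton hb).parts = #P.parts + 1 :=
  P.card_extend _ _

lemma card_parts_insertIntoPart (hb : b ∉ s) (P : Finpartition s) {B : Finset α}
    (hB : B ∈ P.parts) : #(P.insertIntoPart hb hB).parts = #P.parts := by
  rw [parts_insertIntoPart, card_insert_of_notMem fun h => hb (P.le (mem_of_mem_erase h)
    (mem_insert_self b B)), card_erase_add_one hB]

lemma part_insertSingleton (hb : b ∉ s) (P : Finpartition s) :
    (P.insertSingleton hb).part b = {b} :=
  part_eq_of_mem _ (mem_insert_self _ _) (mem_singleton_self b)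

lemma part_insertIntoPart (hb : b ∉ s) (P : Finpartition s) {B : Finset α} (hB : B ∈ P.parts) :
    (P.insertIntoPart hb hB).part b = insert b B :=
  part_eq_of_mem _ (mem_insert_self _ _) (mem_insert_self b B)

lemma restrict_insertSingleton (hb : b ∉ s) (P : Finpartition s) :
    (P.insertSingleton hb).restrict (subset_insert b s) = P := by
  ext C
  rw [mem_restrict_parts, parts_insertSingleton]
  constructor
  · rintro ⟨hC, D, hD, rfl⟩
    rcases mem_insert.1 hD with rfl | hD
    · simp [hb] at hC
    · rwa [inter_eq_left.2 (P.le hD)]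
  · exact fun hC =>
      ⟨P.nonempty_of_mem_parts hC, C, mem_insert_of_mem hC, inter_eq_left.2 (P.le hC)⟩

lemma restrict_insertIntoPart (hb : b ∉ s) (P : Finpartition s) {B : Finset α}
    (hB : B ∈ P.parts) : (P.insertIntoPart hb hB).restrict (subset_insert b s) = P := by
  ext C
  rw [mem_restrict_parts, parts_insertIntoPart]
  constructor
  · rintro ⟨-, D, hD, rfl⟩
    rcases mem_insert.1 hD with rfl | hD
    · rwa [insert_inter_of_notMem hb, inter_eq_left.2 (P.le hB)]
    · rw [inter_eq_left.2 (P.le (mem_of_mem_erase hD))]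
      exact mem_of_mem_erase hD
  · intro hC
    refine ⟨P.nonempty_of_mem_parts hC, ?_⟩
    rcases eq_or_ne C B with rfl | hCB
    · refine ⟨insert b C, mem_insert_self _ _, ?_⟩
      rw [insert_inter_of_notMem hb, inter_eq_left.2 (P.le hC)]
    · exact ⟨C, mem_insert_of_mem (mem_erase.2 ⟨hCB, hC⟩), inter_eq_left.2 (P.le hC)⟩

section Restrict

variable {Q : Finpartition (insert b s)}

lemma inter_eq_self_of_notMem {D : Finset α} (hD : D ∈ Q.parts) (hbD : b ∉ D) : D ∩ s = D :=
  inter_eq_left.2 fun _ hx => (mem_insert.1 (Q.le hD hx)).resolve_left fun h => hbD (h ▸ hx)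

lemma insert_part_inter (Q : Finpartition (insert b s)) : insert b (Q.part b ∩ s) = Q.part b := by
  ext x
  simp only [mem_insert, mem_inter]
  constructor
  · rintro (rfl | ⟨hx, -⟩)
    · exact Q.mem_part_self.2 (mem_insert_self x s)
    · exact hx
  · intro hx
    simpa [hx] using mem_insert.1 (Q.part_subset b hx)

lemma part_inter_mem_restrict (hQ : Q.part b ≠ {b}) :
    Q.part b ∩ s ∈ (Q.restrict (subset_insert b s)).parts := by
  refine (mem_restrict_parts _).2
    ⟨nonempty_iff_ne_empty.2 fun h => hQ ?_, _, Q.part_mem.2 (mem_insert_self b s), rfl⟩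
  rw [← insert_part_inter, h, insert_empty]

lemma insertSingleton_restrict (hb : b ∉ s) (hQ : Q.part b = {b}) :
    (Q.restrict (subset_insert b s)).insertSingleton hb = Q := by
  have hpart : {b} ∈ Q.parts := hQ ▸ Q.part_mem.2 (mem_insert_self b s)
  ext C
  rw [parts_insertSingleton, mem_insert, mem_restrict_parts]
  constructor
  · rintro (rfl | ⟨hC, D, hD, rfl⟩)
    · exact hpart
    · by_cases hbD : b ∈ D
      · rw [← Q.part_eq_of_mem hD hbD, hQ, singleton_inter_of_notMem hb] at hC
        exact absurd hC not_nonempty_empty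
      · rwa [inter_eq_self_of_notMem hD hbD]
  · intro hC
    by_cases hbC : b ∈ C
    · exact Or.inl ((Q.part_eq_of_mem hC hbC).symm.trans hQ)
    · exact Or.inr ⟨Q.nonempty_of_mem_parts hC, C, hC, inter_eq_self_of_notMem hC hbC⟩

lemma insertIntoPart_restrict (hb : b ∉ s) (hQ : Q.part b ≠ {b}) :
    (Q.restrict (subset_insert b s)).insertIntoPart hb (part_inter_mem_restrict hQ) = Q := by
  ext C
  rw [parts_insertIntoPart, insert_part_inter, mem_insert, mem_erase, mem_restrict_parts]
  constructor
  · rintro (rfl | ⟨hCB, -, D, hD, rfl⟩)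
    · exact Q.part_mem.2 (mem_insert_self b s)
    · by_cases hbD : b ∈ D
      · exact absurd (by rw [Q.part_eq_of_mem hD hbD]) hCB
      · rwa [inter_eq_self_of_notMem hD hbD]
  · intro hC
    by_cases hbC : b ∈ C
    · exact Or.inl (Q.part_eq_of_mem hC hbC).symm
    · refine Or.inr ⟨fun hCB => ?_, Q.nonempty_of_mem_parts hC, C, hC,
        inter_eq_self_of_notMem hC hbC⟩
      obtain ⟨x, hx⟩ := Q.nonempty_of_mem_parts hC
      have hxb : x ∈ Q.part b := (mem_inter.1 (hCB ▸ hx)).1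
      exact hbC (Q.eq_of_mem_parts hC (Q.part_mem.2 (mem_insert_self b s)) hx hxb ▸
        Q.mem_part_self.2 (mem_insert_self b s))

end Restrict

def insertPart (hb : b ∉ s) (P : Finpartition s) : Option P.parts → Finpartition (insert b s)
  | none => P.insertSingleton hb
  | some B => P.insertIntoPart hb B.2

lemma bijective_insertPart (hb : b ∉ s) :
    Function.Bijective fun x : Σ P : Finpartition s, Option P.parts => x.1.insertPart hb x.2 := by
  refine ⟨fun ⟨P, o⟩ ⟨P', o'⟩ h => ?_, fun Q => ?_⟩
  · have hres (P : Finpartition s) (o) : (P.insertPart hb o).restrict (subset_insert b s) = P := by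
      cases o
      exacts [restrict_insertSingleton hb P, restrict_insertIntoPart hb P (Subtype.prop _)]
    obtain rfl : P = P' := by simpa [hres] using congrArg (·.restrict (subset_insert b s)) h
    have hpart := congrArg (fun Q => Q.part b ∩ s) h
    have hP : ∀ B ∈ P.parts, B ∩ s = B := fun B hB => inter_eq_left.2 (P.le hB)
    rcases o with _ | ⟨B, hB⟩ <;> rcases o' with _ | ⟨B', hB'⟩ <;>
      simp only [insertPart, part_insertSingleton, part_insertIntoPart,
        singleton_inter_of_notMem hb, insert_inter_of_notMem hb, *] at hpart
    · rfl
    · exact absurd hpart.symm (P.ne_empty hB')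
    · exact absurd hpart (P.ne_empty hB)
    · subst hpart
      rfl
  · by_cases hQ : Q.part b = {b}
    · exact ⟨⟨_, none⟩, insertSingleton_restrict hb hQ⟩
    · exact ⟨⟨_, some ⟨_, part_inter_mem_restrict hQ⟩⟩, insertIntoPart_restrict hb hQ⟩

lemma sum_comp_card_parts_insert {M : Type*} [AddCommMonoid M] (hb : b ∉ s) (f : ℕ → M) :
    ∑ Q : Finpartition (insert b s), f #Q.parts =
      ∑ P : Finpartition s, (f (#P.parts + 1) + #P.parts • f #P.parts) := by
  rw [← (Equiv.ofBijective _ (bijective_insertPart hb)).sum_comp, Fintype.sum_sigma]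
  refine sum_congr rfl fun P _ => ?_
  simp [Fintype.sum_option, insertPart, card_parts_insertSingleton, card_parts_insertIntoPart]

end Finpartition

section PartitionPoly

variable {α : Type*} [DecidableEq α]

noncomputable def partitionPoly (s : Finset α) : ℕ[X] := ∑ P : Finpartition s, (X + 1) ^ #P.parts

lemma X_add_one_mul_derivative_pow (n : ℕ) :
    (X + 1) * derivative ((X + 1 : ℕ[X]) ^ n) = n • (X + 1) ^ n := by
  rcases n with _ | n
  · simp
  · rw [derivative_pow_succ]
    simp only [derivative_add, derivative_X, derivative_one, add_zero, mul_one, nsmul_eq_mul,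
      pow_succ]
    rw [← C_eq_natCast, Nat.cast_succ]
    ring

lemma partitionPoly_empty : partitionPoly (∅ : Finset α) = 1 := by
  change ∑ P : Finpartition (⊥ : Finset α), (X + 1 : ℕ[X]) ^ #P.parts = 1
  rw [Fintype.sum_unique, Finpartition.parts_eq_empty_iff.2 rfl, card_empty, pow_zero]

lemma partitionPoly_insert {s : Finset α} {b : α} (hb : b ∉ s) :
    partitionPoly (insert b s) = (X + 1) * (partitionPoly s + derivative (partitionPoly s)) := by
  rw [partitionPoly, Finpartition.sum_comp_card_parts_insert hb fun n => (X + 1 : ℕ[X]) ^ n,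
    partitionPoly, map_sum, ← sum_add_distrib, mul_sum]
  refine sum_congr rfl fun P _ => ?_
  rw [mul_add, X_add_one_mul_derivative_pow, pow_succ, mul_comm]

lemma coeff_zero_partitionPoly (s : Finset α) :
    (partitionPoly s).coeff 0 = Fintype.card (Finpartition s) := by
  simp [partitionPoly, coeff_zero_eq_eval_zero, eval_finsetSum]

lemma vacPoly_two_mul_card_sub_one (s : Finset α) : vacPoly (2 * #s - 1) = partitionPoly s := by
  induction s using Finset.induction_on with
  | empty => simp [vacPoly, partitionPoly_empty]
  | insert b s hb ih =>
    rw [card_insert_of_notMem hb, partitionPoly_insert hb, ← ih,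
      show 2 * (#s + 1) - 1 = 2 * #s + 1 by omega, vacPoly_two_mul_add_one, vacPoly_two_mul]

end PartitionPoly

theorem card_vacillating_tableaux_empty_shape_general (r : ℕ) :
    Nat.card {t : ℕ → ℕ → ℕ // IsVacTab r t (fun _ => 0)} = bell r := by
  calc Nat.card {t : ℕ → ℕ → ℕ // IsVacTab r t (fun _ => 0)}
      = Nat.card {t // IsWalk vacStep 0 (2 * r - 1) t 0} :=
        Nat.card_congr (Equiv.subtypeEquivRight fun t => isVacTab_iff_isWalk r t 0)
    _ = (vacPoly (2 * r - 1)).coeff 0 := by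
        rw [card_isWalk_vacStep _ isPartition_zero, downPathPairing_zero_apply]
    _ = (partitionPoly (univ : Finset (Fin r))).coeff 0 := by
        rw [← vacPoly_two_mul_card_sub_one, card_univ, Fintype.card_fin]
    _ = bell r := by rw [coeff_zero_partitionPoly, bell, Nat.card_eq_fintype_card]

/-- For `r ≥ 1`, the number of vacillating tableaux of shape `∅` and length `r`
equals the Bell number `B(r)`. -/
theorem card_vacillating_tableaux_empty_shape (r : ℕ) (hr : 1 ≤ r) :
    Nat.card {t : ℕ → ℕ → ℕ // IsVacTab r t (fun _ => 0)} = bell r :=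
  card_vacillating_tableaux_empty_shape_general r
end

section
/- Fix an integer δ and a natural number r ≥ 1. Define a vacillating tableau of shape λ and length r as a sequence (t_0 = ∅, t_1, …, t_{2r−1} = λ) of partitions where at each odd index a box is added or nothing changes, and at each even index ≥ 2 a box is removed or nothing changes. Define its weight w ∈ ℤ^{2r−1} by: for odd m, w_m = c(ε) if a box ε was added at step m, and w_m = δ − |t_m| if t_m = t_{m−1}; for even m, w_m = δ − c(ε) if a box ε was removed at step m, and w_m = |t_m| if t_m = t_{m−1} (here c(ε) = j − i is the content of the box ε = (i,j), and |t_m| the number of boxes of t_m). Theorem: Let μ be a partition of r, and let λ ≠ μ be a partition with |λ| ≤ r. Then there exist a vacillating tableau u of shape μ and a vacillating tableau t of shape λ, both of length r, with equal weight vectors, if and only if there exists a row index i such that λ_j = μ_j for all j ≠ i, μ_i − i = δ − |λ|, and λ_i − i = δ − |μ|. -/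
/-!
Since `|μ| = r`, the tableau `u` must add a box at every odd step and stay at every even
step, so the common weight is forced: `w (2k) = k`, and `w (2k+1)` is the content of the box
added by `u`. Reading the moves of `t` off these weights, an induction shows that `t` and `u`
either coincide or differ in a single row `i`, where the addable boxes of `u` and `t` have
contents `c - |t|` and `c - |u|` (`c = δ` after even steps, `δ + 1` after odd ones); at the
last step this is the row condition, `λ = μ` being excluded.

Conversely, let `u` build `λ` box by box and then extend row `i` up to `μ`. The tableau `t`
follows `u` until it is halfway between `|λ|` and `r` boxes, and from then on alternately
waits (its weight `δ - |t|` is the content of the box `u` adds to row `i`) and removes a box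
from row `i` (of content `δ - k` at step `2k`), ending at `λ`.
-/

lemma addRow_apply (l : ℕ → ℕ) (i j : ℕ) :
    addRow l i j = if j = i then l i + 1 else l j :=
  Function.update_apply l i (l i + 1) j

@[simp] lemma addRow_self (l : ℕ → ℕ) (i : ℕ) : addRow l i i = l i + 1 := by
  simp [addRow]

@[simp] lemma addRow_of_ne (l : ℕ → ℕ) {i j : ℕ} (h : j ≠ i) : addRow l i j = l j := by
  simp [addRow, h]

namespace IsPartition

variable {l : ℕ → ℕ}

lemma finite_boxes (hl : IsPartition l) : {p : ℕ × ℕ | p.2 < l p.1}.Finite := by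
  obtain ⟨hanti, N, hN⟩ := hl
  refine ((Set.finite_Iio N).prod (Set.finite_Iio (l 0))).subset ?_
  rintro ⟨a, b⟩ (h : b < l a)
  refine ⟨?_, lt_of_lt_of_le h (hanti (Nat.zero_le a))⟩
  by_contra ha
  simp [hN a (not_lt.1 ha)] at h

lemma content_injective (hl : IsPartition l) : Function.Injective fun j => (l j : ℤ) - j := by
  refine StrictAnti.injective fun a b hab => ?_
  have : l b ≤ l a := hl.1 hab.le
  omega

lemma eq_zero_of_psize_eq_zero (hl : IsPartition l) (h : psize l = 0) : l = fun _ => 0 := by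
  funext j
  by_contra hj
  have hbox : (j, 0) ∈ {p : ℕ × ℕ | p.2 < l p.1} := Nat.pos_of_ne_zero hj
  rw [psize, Set.ncard_eq_zero hl.finite_boxes] at h
  rw [h] at hbox
  exact hbox

lemma update {i x : ℕ} (hl : IsPartition l) (hx : l (i + 1) ≤ x) (hx' : ∀ j < i, x ≤ l j) :
    IsPartition (Function.update l i x) := by
  obtain ⟨hanti, N, hN⟩ := hl
  refine ⟨fun a b hab => ?_, max N (i + 1), fun j hj => ?_⟩
  · simp only [Function.update_apply]
    split_ifs with hb ha ha
    · exact le_rfl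
    · exact hx' a (by omega)
    · exact (hanti (show i + 1 ≤ b by omega)).trans hx
    · exact hanti hab
  · rw [Function.update_of_ne (by omega), hN j (by omega)]

lemma exists_eq_addRow (hl : IsPartition l) (h0 : l ≠ fun _ => 0) :
    ∃ l' j, IsPartition l' ∧ l = addRow l' j := by
  obtain ⟨N, hN⟩ := hl.2
  -- `Nat.find hex` is the last nonempty row, whose last box is a removable corner.
  have hex : ∃ j, l (j + 1) = 0 := ⟨N, hN _ (by omega)⟩
  have hlast : l (Nat.find hex) ≠ 0 := by
    rcases Nat.eq_zero_or_pos (Nat.find hex) with hz | hpos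
    · rw [hz]
      exact fun h => h0 (funext fun j => Nat.eq_zero_of_le_zero ((hl.1 (Nat.zero_le j)).trans h.le))
    · have := Nat.find_min hex (Nat.sub_one_lt_of_lt hpos)
      rwa [Nat.sub_add_cancel (Nat.one_le_iff_ne_zero.2 hpos.ne')] at this
  refine ⟨Function.update l (Nat.find hex) (l (Nat.find hex) - 1), Nat.find hex,
    hl.update (by rw [Nat.find_spec hex]; exact Nat.zero_le _)
      fun j hj => (Nat.sub_le _ _).trans (hl.1 hj.le), ?_⟩
  rw [addRow, Function.update_self, Function.update_idem, Nat.sub_add_cancel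
    (Nat.pos_of_ne_zero hlast), Function.update_eq_self]

end IsPartition

@[simp] lemma psize_zero : psize (fun _ => 0) = 0 := by
  simp only [psize, Nat.not_lt_zero, Set.ofPred_false, Set.ncard_empty]

lemma psize_addRow {l : ℕ → ℕ} (hl : IsPartition l) (i : ℕ) :
    psize (addRow l i) = psize l + 1 := by
  have hboxes : {p : ℕ × ℕ | p.2 < addRow l i p.1} =
      insert (i, l i) {p : ℕ × ℕ | p.2 < l p.1} := by
    ext ⟨a, b⟩
    simp only [Set.mem_ofPred_eq, Set.mem_insert_iff, Prod.mk.injEq, addRow_apply]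
    by_cases h : a = i
    · subst h; simp only [if_true, true_and]; omega
    · simp [h]
  rw [psize, hboxes, Set.ncard_insert_of_notMem (by simp) hl.finite_boxes, psize]

lemma eq_of_content_eq_of_eq_off_row {s l : ℕ → ℕ} {i a b : ℕ} (hs : IsPartition s)
    (hl : IsPartition l) (hoff : ∀ j, j ≠ i → s j = l j)
    (h : (s a : ℤ) - a = (l b : ℤ) - b) : a = b := by
  by_cases ha : a = i
  · subst ha
    by_cases hb : b = a
    · exact hb.symm
    · exact hs.content_injective (show (s a : ℤ) - a = (s b : ℤ) - b by rw [hoff b hb]; exact h)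
  · exact hl.content_injective (show (l a : ℤ) - a = (l b : ℤ) - b by rw [← hoff a ha]; exact h)

lemma eq_of_eq_off_row {s l : ℕ → ℕ} {i : ℕ} (hoff : ∀ j, j ≠ i → s j = l j)
    (hi : s i = l i) : s = l := by
  funext j
  by_cases hj : j = i
  · rw [hj, hi]
  · exact hoff j hj

/-- Relates the shapes `s` of `t` and `l` of the full tableau `u` at a common step, with
`c = δ` after even steps and `c = δ + 1` after odd ones. -/
def OneRowDefect (c : ℤ) (s l : ℕ → ℕ) : Prop :=
  s = l ∨ ∃ i, (∀ j, j ≠ i → s j = l j) ∧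
    (l i : ℤ) - i = c - psize s ∧ (s i : ℤ) - i = c - psize l

namespace OneRowDefect

variable {δ x : ℤ} {s l s' : ℕ → ℕ}

lemma add_step {b : ℕ} (hs : IsPartition s) (hl : IsPartition l) (hx : x = (l b : ℤ) - b)
    (hs' : (s' = s ∧ x = δ - psize s') ∨ ∃ a, s' = addRow s a ∧ x = (s a : ℤ) - a)
    (h : OneRowDefect δ s l) : OneRowDefect (δ + 1) s' (addRow l b) := by
  have hlb := psize_addRow hl b
  rcases h with rfl | ⟨i, hoff, hT, hB⟩
  · rcases hs' with ⟨rfl, hw⟩ | ⟨a, rfl, hw⟩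
    · refine Or.inr ⟨b, fun j hj => (addRow_of_ne _ hj).symm, ?_, ?_⟩
      · rw [addRow_self]; push_cast; omega
      · rw [hlb]; push_cast; omega
    · rw [hs.content_injective (hw.symm.trans hx : (s a : ℤ) - a = (s b : ℤ) - b)]
      exact Or.inl rfl
  · rcases hs' with ⟨rfl, hw⟩ | ⟨a, rfl, hw⟩
    · obtain rfl : i = b := hl.content_injective (hT.trans (hw.symm.trans hx))
      refine Or.inr ⟨i, fun j hj => by rw [addRow_of_ne l hj, hoff j hj], ?_, ?_⟩
      · rw [addRow_self]; push_cast; omega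
      · rw [hlb]; push_cast; omega
    · obtain rfl : a = b := eq_of_content_eq_of_eq_off_row hs hl hoff (hw.symm.trans hx)
      by_cases hai : a = i
      · subst hai
        rw [eq_of_eq_off_row hoff (by have := hw.symm.trans hx; omega)]
        exact Or.inl rfl
      · have hsa := psize_addRow hs a
        refine Or.inr ⟨i, fun j hj => ?_, ?_, ?_⟩
        · simp only [addRow_apply]
          split_ifs with hja
          · subst hja; rw [hoff j hj]
          · exact hoff j hj
        · rw [addRow_of_ne l (Ne.symm hai), hsa]; push_cast; omega
        · rw [addRow_of_ne s (Ne.symm hai), hlb]; push_cast; omega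

lemma stay_step (hs' : IsPartition s') (hs : IsPartition s) (hx : x = psize l)
    (hstep : (s' = s ∧ x = psize s') ∨ ∃ a, s = addRow s' a ∧ x = δ - ((s' a : ℤ) - a))
    (h : OneRowDefect (δ + 1) s l) : OneRowDefect δ s' l := by
  rcases hstep with ⟨rfl, hw⟩ | ⟨a, rfl, hw⟩
  · rcases h with rfl | ⟨i, hoff, hT, hB⟩
    · exact Or.inl rfl
    · have hsize : (psize s' : ℤ) = psize l := hw.symm.trans hx
      exact Or.inl (eq_of_eq_off_row hoff (by omega))
  · have hsa := psize_addRow hs' a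
    rcases h with rfl | ⟨i, hoff, hT, hB⟩
    · refine Or.inr ⟨a, fun j hj => (addRow_of_ne s' hj).symm, ?_, ?_⟩
      · rw [hsa] at hx
        rw [addRow_self]; push_cast; omega
      · omega
    · obtain rfl : a = i := hs.content_injective
        (show ((addRow s' a) a : ℤ) - a = ((addRow s' a) i : ℤ) - i by
          rw [addRow_self, hB]; push_cast; omega)
      refine Or.inr ⟨a, fun j hj => by rw [← hoff j hj, addRow_of_ne s' hj], ?_, ?_⟩
      · rw [hT, hsa]; push_cast; ring
      · rw [addRow_self] at hB; push_cast at hB; omega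

end OneRowDefect

namespace HasWeight

variable {δ : ℤ} {r k : ℕ} {t : ℕ → ℕ → ℕ} {w : ℕ → ℤ}

lemma odd (hw : HasWeight δ r t w) (hk : 2 * k + 1 < 2 * r) :
    (t (2 * k + 1) = t (2 * k) ∧ w (2 * k + 1) = δ - psize (t (2 * k + 1))) ∨
      ∃ i, t (2 * k + 1) = addRow (t (2 * k)) i ∧ w (2 * k + 1) = (t (2 * k) i : ℤ) - i :=
  (hw (2 * k + 1) (by omega) hk).1 (by omega)

lemma even (hw : HasWeight δ r t w) (hk : 2 * k + 2 < 2 * r) :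
    (t (2 * k + 2) = t (2 * k + 1) ∧ w (2 * k + 2) = psize (t (2 * k + 2))) ∨
      ∃ i, t (2 * k + 1) = addRow (t (2 * k + 2)) i ∧
        w (2 * k + 2) = δ - ((t (2 * k + 2) i : ℤ) - i) :=
  (hw (2 * k + 2) (by omega) hk).2 (by omega)

end HasWeight

namespace IsVacTab

variable {r : ℕ} {t : ℕ → ℕ → ℕ} {lam : ℕ → ℕ}

lemma psize_succ_le (ht : IsVacTab r t lam) {m : ℕ} (hm : m + 1 < 2 * r) :
    psize (t (m + 1)) + (m + 1) / 2 ≤ psize (t m) + (m + 2) / 2 := by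
  obtain ⟨hpart, -, -, hodd, heven, -⟩ := ht
  rcases Nat.mod_two_eq_zero_or_one (m + 1) with h | h
  · rcases heven (m + 1) (by omega) hm h with hst | ⟨i, hi⟩
    · rw [hst, Nat.add_sub_cancel]; omega
    · have := psize_addRow (hpart (m + 1) hm) i
      rw [← hi, Nat.add_sub_cancel] at this
      omega
  · rcases hodd (m + 1) hm h with hst | ⟨i, hi⟩
    · rw [hst, Nat.add_sub_cancel]; omega
    · rw [hi, Nat.add_sub_cancel, psize_addRow (hpart m (by omega))]
      omega

lemma psize_add_le (ht : IsVacTab r t lam) {m m' : ℕ} (hmm' : m ≤ m') (hm' : m' < 2 * r) :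
    psize (t m') + (m + 1) / 2 ≤ psize (t m) + (m' + 1) / 2 := by
  induction m', hmm' using Nat.le_induction with
  | base => rfl
  | succ n _ ih =>
    have := ht.psize_succ_le hm'
    have := ih (by omega)
    omega

lemma psize_eq_of_full (ht : IsVacTab r t lam) (hlam : psize lam = r) {m : ℕ}
    (hm : m < 2 * r) : psize (t m) = (m + 1) / 2 := by
  have h0 := ht.psize_add_le (Nat.zero_le m) hm
  have h1 := ht.psize_add_le (show m ≤ 2 * r - 1 by omega) (by omega)
  rw [ht.2.1, psize_zero] at h0
  rw [ht.2.2.1, hlam] at h1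
  omega

end IsVacTab

section FullTableau

variable {δ : ℤ} {r k : ℕ} {u : ℕ → ℕ → ℕ} {w : ℕ → ℤ} {mu : ℕ → ℕ}

lemma HasWeight.exists_addRow_of_full (hu : IsVacTab r u mu) (hmu : psize mu = r)
    (hw : HasWeight δ r u w) (hk : 2 * k + 1 < 2 * r) :
    ∃ b, u (2 * k + 1) = addRow (u (2 * k)) b ∧ w (2 * k + 1) = (u (2 * k) b : ℤ) - b := by
  refine (hw.odd hk).resolve_left fun ⟨hstay, _⟩ => ?_
  have h1 := hu.psize_eq_of_full hmu hk
  have h2 := hu.psize_eq_of_full hmu (show 2 * k < 2 * r by omega)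
  rw [hstay] at h1
  omega

lemma HasWeight.stay_of_full (hu : IsVacTab r u mu) (hmu : psize mu = r)
    (hw : HasWeight δ r u w) (hk : 2 * k + 2 < 2 * r) :
    u (2 * k + 2) = u (2 * k + 1) ∧ w (2 * k + 2) = psize (u (2 * k + 1)) := by
  refine (hw.even hk).elim (fun ⟨hstay, hwk⟩ => ⟨hstay, hstay ▸ hwk⟩) fun ⟨i, hi, _⟩ => ?_
  have := psize_addRow (hu.1 _ hk) i
  rw [← hi, hu.psize_eq_of_full hmu hk, hu.psize_eq_of_full hmu (by omega)] at this
  omega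

end FullTableau

lemma oneRowDefect_of_common_weight {δ : ℤ} {r : ℕ} {u t : ℕ → ℕ → ℕ} {w : ℕ → ℤ}
    {lam mu : ℕ → ℕ} (hu : IsVacTab r u mu) (hmu : psize mu = r) (ht : IsVacTab r t lam)
    (hwu : HasWeight δ r u w) (hwt : HasWeight δ r t w) (k : ℕ) :
    (2 * k < 2 * r → OneRowDefect δ (t (2 * k)) (u (2 * k))) ∧
      (2 * k + 1 < 2 * r → OneRowDefect (δ + 1) (t (2 * k + 1)) (u (2 * k + 1))) := by
  have odd_of_even (k : ℕ) (hk : 2 * k + 1 < 2 * r) (h : OneRowDefect δ (t (2 * k)) (u (2 * k))) :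
      OneRowDefect (δ + 1) (t (2 * k + 1)) (u (2 * k + 1)) := by
    obtain ⟨b, hb, hwb⟩ := hwu.exists_addRow_of_full hu hmu hk
    rw [hb]
    exact h.add_step (ht.1 _ (by omega)) (hu.1 _ (by omega)) hwb (hwt.odd hk)
  induction k with
  | zero =>
    have h0 : OneRowDefect δ (t 0) (u 0) := Or.inl (by rw [ht.2.1, hu.2.1])
    exact ⟨fun _ => h0, fun hk => odd_of_even 0 hk h0⟩
  | succ k ih =>
    have heven (hk : 2 * (k + 1) < 2 * r) : OneRowDefect δ (t (2 * (k + 1))) (u (2 * (k + 1))) := by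
      obtain ⟨hstay, hwk⟩ := hwu.stay_of_full hu hmu hk
      rw [show 2 * (k + 1) = 2 * k + 2 by ring, hstay]
      exact (ih.2 (by omega)).stay_step (ht.1 _ hk) (ht.1 _ (by omega)) hwk (hwt.even hk)
    exact ⟨heven, fun hk => odd_of_even (k + 1) hk (heven (by omega))⟩

lemma row_condition_of_common_weight {δ : ℤ} {r : ℕ} (hr : 1 ≤ r) {lam mu : ℕ → ℕ}
    (hmur : psize mu = r) (hne : lam ≠ mu) {u t : ℕ → ℕ → ℕ} {w : ℕ → ℤ}
    (hu : IsVacTab r u mu) (ht : IsVacTab r t lam)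
    (hwu : HasWeight δ r u w) (hwt : HasWeight δ r t w) :
    ∃ i : ℕ, (∀ j, j ≠ i → lam j = mu j) ∧
      (mu i : ℤ) - (i + 1) = δ - psize lam ∧ (lam i : ℤ) - (i + 1) = δ - psize mu := by
  have hlast := (oneRowDefect_of_common_weight hu hmur ht hwu hwt (r - 1)).2 (by omega)
  rw [show 2 * (r - 1) + 1 = 2 * r - 1 by omega, ht.2.2.1, hu.2.2.1] at hlast
  rcases hlast with h | ⟨i, hoff, hT, hB⟩
  · exact absurd h hne
  · exact ⟨i, hoff, by omega, by omega⟩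

def grow (ρ : ℕ → ℕ) : ℕ → ℕ → ℕ
  | 0 => fun _ => 0
  | k + 1 => addRow (grow ρ k) (ρ k)

def growContent (ρ : ℕ → ℕ) (k : ℕ) : ℤ := (grow ρ k (ρ k) : ℤ) - ρ k

lemma grow_congr {ρ ρ' : ℕ → ℕ} {n : ℕ} (h : ∀ k < n, ρ k = ρ' k) : grow ρ n = grow ρ' n := by
  induction n with
  | zero => rfl
  | succ n ih => rw [grow, grow, h n (by omega), ih fun k hk => h k (by omega)]

lemma psize_grow {ρ : ℕ → ℕ} {n : ℕ} (hρ : ∀ k ≤ n, IsPartition (grow ρ k)) :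
    psize (grow ρ n) = n := by
  induction n with
  | zero => exact psize_zero
  | succ n ih => rw [grow, psize_addRow (hρ n (by omega)), ih fun k hk => hρ k (by omega)]

lemma grow_ite_eq_update (ρ : ℕ → ℕ) (L i n : ℕ) :
    grow (fun k => if k < L then ρ k else i) (L + n) =
      Function.update (grow ρ L) i (grow ρ L i + n) := by
  induction n with
  | zero =>
    rw [Nat.add_zero, Nat.add_zero, Function.update_eq_self]
    exact grow_congr fun k hk => if_pos hk
  | succ n ih =>
    rw [← Nat.add_assoc, grow, ih, if_neg (by omega), addRow, Function.update_self,
      Function.update_idem, Nat.add_assoc]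

namespace IsPartition

variable {l : ℕ → ℕ}

lemma exists_grow_eq (hl : IsPartition l) :
    ∃ ρ, grow ρ (psize l) = l ∧ ∀ k ≤ psize l, IsPartition (grow ρ k) := by
  generalize hn : psize l = n
  induction n generalizing l with
  | zero =>
    obtain rfl := hl.eq_zero_of_psize_eq_zero hn
    refine ⟨id, rfl, fun k hk => ?_⟩
    rw [Nat.le_zero.1 hk]
    exact hl
  | succ n ih =>
    obtain ⟨l', j, hl', rfl⟩ := hl.exists_eq_addRow (by rintro rfl; simp at hn)
    obtain ⟨ρ, hρ, hpart⟩ := ih hl' (by rw [psize_addRow hl'] at hn; omega)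
    have hprefix : ∀ k ≤ n, grow (Function.update ρ n j) k = grow ρ k := fun k hk =>
      grow_congr fun k' hk' => Function.update_of_ne (by omega) _ _
    refine ⟨Function.update ρ n j, ?_, fun k hk => ?_⟩
    · rw [grow, hprefix n le_rfl, hρ, Function.update_self]
    · rcases Nat.lt_or_ge k (n + 1) with hk' | hk'
      · rw [hprefix k (by omega)]; exact hpart k (by omega)
      · rw [show k = n + 1 by omega, grow, hprefix n le_rfl, hρ, Function.update_self]
        exact hl

end IsPartition

lemma isVacTab_of_hasWeight {δ : ℤ} {r : ℕ} {t : ℕ → ℕ → ℕ} {lam : ℕ → ℕ} {w : ℕ → ℤ}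
    (hpart : ∀ m, m < 2 * r → IsPartition (t m)) (h0 : t 0 = fun _ => 0)
    (hend : t (2 * r - 1) = lam) (hafter : ∀ m, 2 * r ≤ m → t m = fun _ => 0)
    (hw : HasWeight δ r t w) : IsVacTab r t lam :=
  ⟨hpart, h0, hend,
    fun m hm hodd => ((hw m (by omega) hm).1 hodd).imp And.left fun ⟨i, hi, _⟩ => ⟨i, hi⟩,
    fun m h2 hm heven => ((hw m (by omega) hm).2 heven).imp And.left fun ⟨i, hi, _⟩ => ⟨i, hi⟩,
    hafter⟩

def heightTab (F : ℕ → ℕ → ℕ) (r : ℕ) (η : ℕ → ℕ) : ℕ → ℕ → ℕ :=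
  fun m => if m < 2 * r then F (η m) else fun _ => 0

section HeightTab

variable {δ : ℤ} {r n : ℕ} {ρ η : ℕ → ℕ} {w : ℕ → ℤ}

lemma hasWeight_heightTab (hρ : ∀ k ≤ n, IsPartition (grow ρ k))
    (hn : ∀ m, m < 2 * r → η m ≤ n)
    (hodd : ∀ k, 2 * k + 1 < 2 * r →
      (η (2 * k + 1) = η (2 * k) ∧ w (2 * k + 1) = δ - η (2 * k + 1)) ∨
        (η (2 * k + 1) = η (2 * k) + 1 ∧ w (2 * k + 1) = growContent ρ (η (2 * k))))
    (heven : ∀ k, 2 * k + 2 < 2 * r →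
      (η (2 * k + 2) = η (2 * k + 1) ∧ w (2 * k + 2) = η (2 * k + 2)) ∨
        (η (2 * k + 1) = η (2 * k + 2) + 1 ∧
          w (2 * k + 2) = δ - growContent ρ (η (2 * k + 2)))) :
    HasWeight δ r (heightTab (grow ρ) r η) w := by
  have hsize (m : ℕ) (hm : m < 2 * r) : psize (grow ρ (η m)) = η m :=
    psize_grow fun k hk => hρ k (hk.trans (hn m hm))
  intro m h1 hm
  simp only [heightTab, if_pos hm, if_pos (show m - 1 < 2 * r by omega)]
  obtain ⟨k, rfl | rfl⟩ := Nat.even_or_odd' m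
  · obtain ⟨k, rfl⟩ : ∃ k', k = k' + 1 := ⟨k - 1, by omega⟩
    refine ⟨fun hpar => absurd hpar (by omega), fun _ => ?_⟩
    rw [show 2 * (k + 1) = 2 * k + 2 by ring] at hm ⊢
    rw [show 2 * k + 2 - 1 = 2 * k + 1 by omega]
    rcases heven k hm with ⟨he, hw⟩ | ⟨he, hw⟩
    · exact Or.inl ⟨by rw [he], by rw [hw, hsize _ hm]⟩
    · exact Or.inr ⟨ρ (η (2 * k + 2)), by rw [he]; rfl, hw⟩
  · refine ⟨fun _ => ?_, fun hpar => absurd hpar (by omega)⟩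
    rw [Nat.add_sub_cancel]
    rcases hodd k hm with ⟨he, hw⟩ | ⟨he, hw⟩
    · exact Or.inl ⟨by rw [he], by rw [hw, hsize _ hm]⟩
    · exact Or.inr ⟨ρ (η (2 * k)), by rw [he]; rfl, hw⟩

lemma isVacTab_heightTab {lam : ℕ → ℕ} (hr : 1 ≤ r) (hρ : ∀ k ≤ n, IsPartition (grow ρ k))
    (hn : ∀ m, m < 2 * r → η m ≤ n) (h0 : η 0 = 0) (hend : grow ρ (η (2 * r - 1)) = lam)
    (hw : HasWeight δ r (heightTab (grow ρ) r η) w) :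
    IsVacTab r (heightTab (grow ρ) r η) lam := by
  refine isVacTab_of_hasWeight (fun m hm => ?_) ?_ ?_ (fun m hm => if_neg (by omega)) hw
  · rw [heightTab, if_pos hm]; exact hρ _ (hn m hm)
  · rw [heightTab, if_pos (by omega), h0]; rfl
  · rw [heightTab, if_pos (by omega), hend]

end HeightTab

lemma IsPartition.exists_grow_extend_row {lam mu : ℕ → ℕ} (hlam : IsPartition lam)
    (hmu : IsPartition mu) {i d : ℕ} (hoff : ∀ j, j ≠ i → lam j = mu j)
    (hmui : mu i = lam i + d) :
    ∃ ρ, (∀ k ≤ psize lam + d, IsPartition (grow ρ k)) ∧ grow ρ (psize lam) = lam ∧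
      grow ρ (psize lam + d) = mu ∧ ∀ n, growContent ρ (psize lam + n) = (lam i : ℤ) + n - i := by
  obtain ⟨ρ, hρL, hρ⟩ := hlam.exists_grow_eq
  generalize psize lam = L at hρL hρ ⊢
  have hrow (n : ℕ) : grow (fun k => if k < L then ρ k else i) (L + n) =
      Function.update lam i (lam i + n) := by
    rw [grow_ite_eq_update, hρL]
  refine ⟨fun k => if k < L then ρ k else i, fun k hk => ?_,
    (grow_congr fun k hk => if_pos hk).trans hρL, ?_, fun n => ?_⟩
  · rcases le_total k L with hkL | hkL
    · rw [grow_congr fun k' hk' => if_pos (show k' < L by omega)]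
      exact hρ k hkL
    · obtain ⟨n, rfl⟩ := Nat.exists_eq_add_of_le hkL
      rw [hrow]
      refine hlam.update ((hlam.1 (Nat.le_succ i)).trans (Nat.le_add_right _ _)) fun j hj => ?_
      have := hmu.1 hj.le
      rw [hoff j hj.ne]
      omega
  · rw [hrow]
    funext j
    by_cases hj : j = i
    · subst hj; rw [Function.update_self, hmui]
    · rw [Function.update_of_ne hj, hoff j hj]
  · rw [growContent, hrow, if_neg (by omega), Function.update_self]
    push_cast; ring

/-- The weight of a tableau that adds the boxes of the word `ρ` at the odd steps and waits
at the even ones. -/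
def wordWeight (ρ : ℕ → ℕ) (m : ℕ) : ℤ :=
  if m % 2 = 1 then growContent ρ (m / 2) else ((m / 2 : ℕ) : ℤ)

section WordWeight

variable {δ : ℤ} {r : ℕ} {ρ : ℕ → ℕ}

lemma wordWeight_odd (ρ : ℕ → ℕ) (k : ℕ) : wordWeight ρ (2 * k + 1) = growContent ρ k := by
  rw [wordWeight, if_pos (by omega), show (2 * k + 1) / 2 = k by omega]

lemma wordWeight_even (ρ : ℕ → ℕ) (k : ℕ) : wordWeight ρ (2 * k + 2) = ((k + 1 : ℕ) : ℤ) := by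
  rw [wordWeight, if_neg (by omega), show (2 * k + 2) / 2 = k + 1 by omega]

lemma hasWeight_wordWeight (hρ : ∀ k ≤ r, IsPartition (grow ρ k)) :
    HasWeight δ r (heightTab (grow ρ) r fun m => (m + 1) / 2) (wordWeight ρ) :=
  hasWeight_heightTab hρ (fun m hm => by omega)
    (fun k _ => Or.inr ⟨by omega, by rw [wordWeight_odd]; congr 1; omega⟩)
    (fun k _ => Or.inl ⟨by omega, by rw [wordWeight_even]; congr 2; omega⟩)

lemma hasWeight_wordWeight_of_growContent {L : ℕ} (hρ : ∀ k ≤ r, IsPartition (grow ρ k))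
    (hcontent : ∀ n, growContent ρ (L + n) = δ + 1 - r + n) :
    HasWeight δ r (heightTab (grow ρ) r fun m => min ((m + 1) / 2) (r + L - 1 - m / 2))
      (wordWeight ρ) := by
  refine hasWeight_heightTab hρ (fun m hm => by omega) (fun k hk => ?_) (fun k hk => ?_)
  · rw [wordWeight_odd]
    by_cases hc : 2 * k + 2 ≤ r + L
    · exact Or.inr ⟨by omega, by congr 1; omega⟩
    · refine Or.inl ⟨by omega, ?_⟩
      rw [show k = L + (k - L) by omega, hcontent]
      omega
  · rw [wordWeight_even]
    by_cases hc : 2 * k + 3 ≤ r + L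
    · exact Or.inl ⟨by omega, by congr 2; omega⟩
    · refine Or.inr ⟨by omega, ?_⟩
      rw [show min ((2 * k + 2 + 1) / 2) (r + L - 1 - (2 * k + 2) / 2) = L + (r - 2 - k) by
        omega, hcontent]
      omega

end WordWeight

lemma exists_common_weight_of_row_condition {δ : ℤ} {r : ℕ} (hr : 1 ≤ r) {lam mu : ℕ → ℕ}
    (hlam : IsPartition lam) (hmu : IsPartition mu) (hmur : psize mu = r)
    (hlamr : psize lam ≤ r) {i : ℕ} (hoff : ∀ j, j ≠ i → lam j = mu j)
    (hmui : (mu i : ℤ) - (i + 1) = δ - psize lam)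
    (hlami : (lam i : ℤ) - (i + 1) = δ - psize mu) :
    ∃ (u t : ℕ → ℕ → ℕ) (w : ℕ → ℤ),
      IsVacTab r u mu ∧ IsVacTab r t lam ∧ HasWeight δ r u w ∧ HasWeight δ r t w := by
  obtain ⟨ρ, hρ, hρlam, hρmu, hcontent⟩ :=
    hlam.exists_grow_extend_row hmu hoff (d := r - psize lam) (by omega)
  rw [Nat.add_sub_cancel' hlamr] at hρ hρmu
  have hwu := hasWeight_wordWeight (δ := δ) hρ
  have hwt := hasWeight_wordWeight_of_growContent (δ := δ) (L := psize lam) hρ fun n => by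
    rw [hcontent]; omega
  refine ⟨_, _, _, isVacTab_heightTab hr hρ (fun m hm => by omega) rfl ?_ hwu,
    isVacTab_heightTab hr hρ (fun m hm => by omega) rfl ?_ hwt, hwu, hwt⟩
  · rw [show (2 * r - 1 + 1) / 2 = r by omega, hρmu]
  · rw [show min ((2 * r - 1 + 1) / 2) (r + psize lam - 1 - (2 * r - 1) / 2) = psize lam by
      omega, hρlam]

/-- Combinatorial characterization of a common Jucys–Murphy weight:
for `μ` a partition of `r` and `λ ≠ μ` a partition with `|λ| ≤ r`, there exist
vacillating tableaux `u` of shape `μ` and `t` of shape `λ`, both of length `r`,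
with equal weight vectors, iff there is a row index `i` (0-indexed) with
`λ_j = μ_j` for all `j ≠ i`, `μ_i − (i+1) = δ − |λ|` and `λ_i − (i+1) = δ − |μ|`. -/
theorem common_JM_weight_iff_row_condition (δ : ℤ) (r : ℕ) (hr : 1 ≤ r)
    (lam mu : ℕ → ℕ) (hlam : IsPartition lam) (hmu : IsPartition mu)
    (hmur : psize mu = r) (hlamr : psize lam ≤ r) (hne : lam ≠ mu) :
    (∃ (u t : ℕ → ℕ → ℕ) (w : ℕ → ℤ),
        IsVacTab r u mu ∧ IsVacTab r t lam ∧
        HasWeight δ r u w ∧ HasWeight δ r t w) ↔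
      ∃ i : ℕ, (∀ j, j ≠ i → lam j = mu j) ∧
        (mu i : ℤ) - (i + 1) = δ - psize lam ∧
        (lam i : ℤ) - (i + 1) = δ - psize mu :=
  ⟨fun ⟨_, _, _, hu, ht, hwu, hwt⟩ => row_condition_of_common_weight hr hmur hne hu ht hwu hwt,
    fun ⟨_, hoff, hmui, hlami⟩ =>
      exists_common_weight_of_row_condition hr hlam hmu hmur hlamr hoff hmui hlami⟩
end

section
/- Fix an integer δ. For partitions λ, μ define λ ∼ μ if the multisets {λ_i − i : i ≥ 1} ∪ {δ − |λ|} and {μ_i − i : i ≥ 1} ∪ {δ − |μ|} are equal, in the sense that the (eventually coinciding, strictly decreasing) β-sequences together with the extra element δ − |λ| (resp. δ − |μ|) agree as multisets after discarding a common cofinite tail. Theorem: each ∼-equivalence class of partitions is totally ordered by containment of Young diagrams, i.e., if λ ∼ μ then λ ⊆ μ or μ ⊆ λ. -/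
/-- The multiplicity of the integer `c` in the multiset
`{λ_i − i : i ≥ 1} ∪ {δ − |λ|}` of β-numbers of `λ` together with the extra
element `δ − |λ|` (0-indexed: β-numbers are `l i − (i+1)`). -/
noncomputable def blockMult (δ : ℤ) (l : ℕ → ℕ) (c : ℤ) : ℕ :=
  Set.ncard {i : ℕ | (l i : ℤ) - (i + 1) = c} + (if c = δ - psize l then 1 else 0)

open Classical in
/-- Fiber counts of an injective function are indicators of range membership. -/
lemma ncard_fiber (f : ℕ → ℤ) (hf : Function.Injective f) (c : ℤ) :
    {i : ℕ | f i = c}.ncard = if c ∈ Set.range f then 1 else 0 := by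
  split_ifs with h
  · obtain ⟨i₀, rfl⟩ := h
    have : {i : ℕ | f i = f i₀} = {i₀} := by
      ext j; simp [hf.eq_iff]
    rw [this, Set.ncard_singleton]
  · have : {i : ℕ | f i = c} = (∅ : Set ℕ) := by
      ext j
      simp only [Set.mem_setOf_eq, Set.mem_empty_iff_false, iff_false]
      intro hj; exact h ⟨j, hj⟩
    simp [this]

lemma above_finite (f : ℕ → ℤ) (hf : StrictAnti f) (c : ℤ) :
    {j : ℕ | c < f j}.Finite := by
  have hb : ∀ j : ℕ, f j ≤ f 0 - j := by
    intro j
    induction j with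
    | zero => simp
    | succ n ih =>
      have h1 : f (n + 1) < f n := hf (Nat.lt_succ_self n)
      push_cast
      omega
  apply Set.Finite.subset (Set.finite_Iio (f 0 - c).toNat)
  intro j hj
  simp only [Set.mem_setOf_eq] at hj
  simp only [Set.mem_Iio]
  have := hb j
  omega

lemma ncard_Iio_nat (i : ℕ) : (Set.Iio i).ncard = i := by
  rw [← Finset.coe_Iio, Set.ncard_coe_finset, Nat.card_Iio]

lemma ncard_Iic_nat (i : ℕ) : (Set.Iic i).ncard = i + 1 := by
  rw [← Finset.coe_Iic, Set.ncard_coe_finset, Nat.card_Iic]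

lemma mem_iff_lt_ncard (f : ℕ → ℤ) (hf : StrictAnti f) (c : ℤ) (i : ℕ) :
    c < f i ↔ i < {j : ℕ | c < f j}.ncard := by
  constructor
  · intro hi
    have hsub : Set.Iic i ⊆ {j : ℕ | c < f j} := by
      intro j hj
      exact lt_of_lt_of_le hi (hf.antitone hj)
    have := Set.ncard_le_ncard hsub (above_finite f hf c)
    rw [ncard_Iic_nat] at this
    omega
  · intro hi
    by_contra hci
    push_neg at hci
    have hsub : {j : ℕ | c < f j} ⊆ Set.Iio i := by
      intro j hj
      by_contra hji
      simp only [Set.mem_Iio, not_lt] at hji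
      exact absurd (lt_of_lt_of_le hj (hf.antitone hji)) (not_lt.mpr hci)
    have := Set.ncard_le_ncard hsub (Set.finite_Iio i)
    rw [ncard_Iio_nat] at this
    omega

lemma range_above_eq (g : ℕ → ℤ) (c : ℤ) :
    {z : ℤ | z ∈ Set.range g ∧ c < z} = g '' {j : ℕ | c < g j} := by
  ext z
  simp only [Set.mem_setOf_eq, Set.mem_image, Set.mem_range]
  constructor
  · rintro ⟨⟨j, rfl⟩, hc⟩; exact ⟨j, hc, rfl⟩
  · rintro ⟨j, hc, rfl⟩; exact ⟨⟨j, rfl⟩, hc⟩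

/-- Main combinatorial half: if the β-multiset of `f` with extra `x` coincides
with that of `g` with extra `y`, and `y ≤ x`, then `f ≤ g` pointwise. -/
lemma half (f g : ℕ → ℤ) (hf : StrictAnti f) (hg : StrictAnti g) (x y : ℤ)
    (hxy : y ≤ x)
    (h : ∀ c : ℤ, {i : ℕ | f i = c}.ncard + (if c = x then 1 else 0)
        = {i : ℕ | g i = c}.ncard + (if c = y then 1 else 0)) :
    ∀ i, f i ≤ g i := by
  classical
  set F := Set.range f with hF
  set G := Set.range g with hG
  have hind : ∀ c : ℤ, (if c ∈ F then 1 else 0) + (if c = x then 1 else 0)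
      = (if c ∈ G then 1 else 0) + (if c = y then 1 else 0) := by
    intro c
    have := h c
    rwa [ncard_fiber f hf.injective, ncard_fiber g hg.injective] at this
  -- key membership facts
  have ha : ∀ z ∈ F, z ≠ y → z ∈ G := by
    intro z hz hne
    by_contra hzG
    have hz' := hind z
    rw [if_pos hz, if_neg hne, if_neg hzG] at hz'
    split_ifs at hz' <;> omega
  have hb : y ∈ F → x ∈ G := by
    intro hyF
    by_contra hxG
    by_cases hxy' : x = y
    · subst hxy'
      have hz' := hind x
      simp only [if_pos rfl, if_pos hyF, if_neg hxG] at hz'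
      omega
    · have hz' := hind x
      rw [if_neg hxG, if_neg hxy', if_pos rfl] at hz'
      split_ifs at hz' <;> omega
  have hc : x ∈ F → x = y := by
    intro hxF
    by_contra hne
    have hz' := hind x
    rw [if_pos hxF, if_pos rfl, if_neg hne] at hz'
    split_ifs at hz' <;> omega
  -- counting comparison on value sets
  have hcount : ∀ c : ℤ,
      {z : ℤ | z ∈ F ∧ c < z}.ncard ≤ {z : ℤ | z ∈ G ∧ c < z}.ncard := by
    intro c
    have hGfin : {z : ℤ | z ∈ G ∧ c < z}.Finite := by
      rw [hG, range_above_eq g c]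
      exact (above_finite g hg c).image g
    refine Set.ncard_le_ncard_of_injOn (fun z => if z = y then x else z) ?_ ?_ hGfin
    · intro z hz
      obtain ⟨hzF, hcz⟩ := hz
      by_cases hzy : z = y
      · simp only [if_pos hzy]
        exact ⟨hb (hzy ▸ hzF), lt_of_lt_of_le (hzy ▸ hcz) hxy⟩
      · simp only [if_neg hzy]
        exact ⟨ha z hzF hzy, hcz⟩
    · intro z1 h1 z2 h2 heq
      dsimp only at heq
      by_cases h1y : z1 = y <;> by_cases h2y : z2 = y
      · rw [h1y, h2y]
      · rw [if_pos h1y, if_neg h2y] at heq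
        exfalso
        have hz2x : z2 = x := heq.symm
        exact h2y (hz2x.trans (hc (hz2x ▸ h2.1)))
      · rw [if_neg h1y, if_pos h2y] at heq
        exfalso
        have hz1x : z1 = x := heq
        exact h1y (hz1x.trans (hc (hz1x ▸ h1.1)))
      · rwa [if_neg h1y, if_neg h2y] at heq
  -- transfer counts to index sets
  have hidx : ∀ c : ℤ, {j : ℕ | c < f j}.ncard ≤ {j : ℕ | c < g j}.ncard := by
    intro c
    have e1 : {z : ℤ | z ∈ F ∧ c < z}.ncard = {j : ℕ | c < f j}.ncard := by
      rw [hF, range_above_eq f c, Set.ncard_image_of_injective _ hf.injective]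
    have e2 : {z : ℤ | z ∈ G ∧ c < z}.ncard = {j : ℕ | c < g j}.ncard := by
      rw [hG, range_above_eq g c, Set.ncard_image_of_injective _ hg.injective]
    rw [← e1, ← e2]
    exact hcount c
  -- conclude pointwise
  intro i
  by_contra hgi
  push_neg at hgi
  have h1 : i < {j : ℕ | g i < f j}.ncard := (mem_iff_lt_ncard f hf (g i) i).1 hgi
  have h2 : i < {j : ℕ | g i < g j}.ncard := lt_of_lt_of_le h1 (hidx (g i))
  exact absurd ((mem_iff_lt_ncard g hg (g i) i).2 h2) (lt_irrefl (g i))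

/-- Characteristic-0 block relation for the partition algebra: if the multisets
`{λ_i − i} ∪ {δ − |λ|}` and `{μ_i − i} ∪ {δ − |μ|}` coincide (elementwise equal
multiplicities), then `λ ⊆ μ` or `μ ⊆ λ`; i.e. each block is totally ordered by
containment of Young diagrams. -/
theorem block_relation_totally_ordered (δ : ℤ) (lam mu : ℕ → ℕ)
    (hlam : IsPartition lam) (hmu : IsPartition mu)
    (h : ∀ c : ℤ, blockMult δ lam c = blockMult δ mu c) :
    (∀ i, lam i ≤ mu i) ∨ (∀ i, mu i ≤ lam i) := by
  set f : ℕ → ℤ := fun i => (lam i : ℤ) - (i + 1) with hfdef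
  set g : ℕ → ℤ := fun i => (mu i : ℤ) - (i + 1) with hgdef
  have hfSA : StrictAnti f := by
    intro a b hab
    have h1 : lam b ≤ lam a := hlam.1 hab.le
    simp only [hfdef]
    omega
  have hgSA : StrictAnti g := by
    intro a b hab
    have h1 : mu b ≤ mu a := hmu.1 hab.le
    simp only [hgdef]
    omega
  have h' : ∀ c : ℤ, {i : ℕ | f i = c}.ncard + (if c = δ - psize lam then 1 else 0)
      = {i : ℕ | g i = c}.ncard + (if c = δ - psize mu then 1 else 0) := by
    intro c
    exact h c
  rcases le_total (δ - (psize mu : ℤ)) (δ - (psize lam : ℤ)) with hle | hle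
  · left
    intro i
    have := half f g hfSA hgSA (δ - psize lam) (δ - psize mu) hle h' i
    simp only [hfdef, hgdef] at this
    omega
  · right
    intro i
    have h'' : ∀ c : ℤ, {i : ℕ | g i = c}.ncard + (if c = δ - psize mu then 1 else 0)
        = {i : ℕ | f i = c}.ncard + (if c = δ - psize lam then 1 else 0) :=
      fun c => (h' c).symm
    have := half g f hgSA hfSA (δ - psize mu) (δ - psize lam) hle h'' i
    simp only [hfdef, hgdef] at this
    omega
end

section
/- Fix an integer δ and r ≥ 1. For a partition λ with |λ| ≤ r, let the augmented weight vector be v(λ) = (1 − |λ|, λ_1 − δ, λ_2 − δ − 1, …, λ_r − δ − r + 1) ∈ ℤ^{r+1} (i.e., v(λ) = λ̂ + ρ where λ̂ = (−|λ|, λ_1, …, λ_r) and ρ = (1, −δ, −δ−1, …, −δ−r+1)). Theorem: for partitions λ ≠ μ with at most r parts, there is a row index i with λ_j = μ_j for all j ≠ i, μ_i − i = δ − |λ| and λ_i − i = δ − |μ|, if and only if v(λ) is obtained from v(μ) by swapping the 0th coordinate with the i-th coordinate for some 1 ≤ i ≤ r, i.e., λ̂ = (0 i) ∘ μ̂ under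 the dot action of a transposition of the Weyl group of type A_r. -/
/-- The augmented weight vector `v(λ) = λ̂ + ρ ∈ ℤ^{r+1}`:
`v(λ)_0 = 1 − |λ|` and `v(λ)_i = λ_i − δ − (i−1)` for `1 ≤ i ≤ r`
(here `λ_i = l (i−1)` with `l` 0-indexed). -/
noncomputable def vvec (δ : ℤ) (r : ℕ) (l : ℕ → ℕ) : Fin (r + 1) → ℤ :=
  fun i => if (i : ℕ) = 0 then 1 - (psize l : ℤ)
    else (l ((i : ℕ) - 1) : ℤ) - δ - ((i : ℕ) - 1)

/-- Lie-theoretic reformulation of the decomposition number criterion: for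
partitions `λ ≠ μ` with at most `r` parts, there is a row `i` (0-indexed,
`i < r`) with `λ_j = μ_j` for `j ≠ i`, `μ_i − (i+1) = δ − |λ|` and
`λ_i − (i+1) = δ − |μ|`, iff `v(λ)` is obtained from `v(μ)` by swapping the
0th coordinate with the `i`-th coordinate for some `1 ≤ i ≤ r`, i.e.
`λ̂ = (0 i) ∘ μ̂` under the dot action of a transposition. -/
theorem row_condition_iff_dot_action_of_transposition (δ : ℤ) (r : ℕ) (hr : 1 ≤ r)
    (lam mu : ℕ → ℕ) (hlam : IsPartition lam) (hmu : IsPartition mu)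
    (hlr : ∀ i, r ≤ i → lam i = 0) (hmr : ∀ i, r ≤ i → mu i = 0)
    (hne : lam ≠ mu) :
    (∃ i : ℕ, i < r ∧ (∀ j, j ≠ i → lam j = mu j) ∧
        (mu i : ℤ) - (i + 1) = δ - psize lam ∧
        (lam i : ℤ) - (i + 1) = δ - psize mu) ↔
      ∃ i : Fin (r + 1), i ≠ 0 ∧
        vvec δ r lam = vvec δ r mu ∘ Equiv.swap 0 i := by
  constructor
  · rintro ⟨i, hi, hj, h1, h2⟩
    refine ⟨⟨i + 1, by omega⟩, by simp [Fin.ext_iff], ?_⟩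
    set k : Fin (r + 1) := ⟨i + 1, by omega⟩ with hk
    funext x
    simp only [Function.comp_apply]
    by_cases hx0 : x = 0
    · subst hx0
      rw [Equiv.swap_apply_left]
      simp only [vvec, hk]
      rw [Fin.val_zero, if_pos rfl, if_neg (by omega : ¬ (i + 1 = 0))]
      simp only [Nat.add_sub_cancel]
      push_cast
      linarith [h1]
    · by_cases hxk : x = k
      · subst hxk
        rw [Equiv.swap_apply_right]
        simp only [vvec, hk]
        rw [Fin.val_zero, if_neg (by omega : ¬ (i + 1 = 0)), if_pos rfl]
        simp only [Nat.add_sub_cancel]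
        push_cast
        linarith [h2]
      · rw [Equiv.swap_apply_of_ne_of_ne hx0 hxk]
        simp only [vvec]
        have hx0' : (x : ℕ) ≠ 0 := fun h => hx0 (Fin.ext h)
        have hxk' : (x : ℕ) ≠ i + 1 := fun h => hxk (Fin.ext h)
        have hji : (x : ℕ) - 1 ≠ i := by omega
        rw [if_neg hx0', if_neg hx0', hj _ hji]
  · rintro ⟨k, hk0, h⟩
    have hkpos : 0 < (k : ℕ) := Fin.pos_of_ne_zero hk0
    have hklt : (k : ℕ) < r + 1 := k.isLt
    set i := (k : ℕ) - 1 with hidef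
    have hki : (k : ℕ) = i + 1 := by omega
    have hir : i < r := by omega
    have h0 := congrFun h 0
    have hk := congrFun h k
    rw [Function.comp_apply, Equiv.swap_apply_left] at h0
    rw [Function.comp_apply, Equiv.swap_apply_right] at hk
    simp only [vvec, Fin.val_zero, if_pos rfl, if_neg (by omega : (k : ℕ) ≠ 0),
      hki, Nat.add_sub_cancel] at h0 hk
    refine ⟨i, hir, ?_, by push_cast at h0 ⊢; linarith, by push_cast at hk ⊢; linarith⟩
    intro j hji
    by_cases hjr : j < r
    · have hx := congrFun h ⟨j + 1, by omega⟩
      have hne0 : (⟨j + 1, by omega⟩ : Fin (r + 1)) ≠ 0 := by simp [Fin.ext_iff]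
      have hnek : (⟨j + 1, by omega⟩ : Fin (r + 1)) ≠ k := by
        simp [Fin.ext_iff]; omega
      rw [Function.comp_apply, Equiv.swap_apply_of_ne_of_ne hne0 hnek] at hx
      simp only [vvec, if_neg (by simp : (j + 1 : ℕ) ≠ 0), Nat.add_sub_cancel] at hx
      have : (lam j : ℤ) = mu j := by linarith
      exact_mod_cast this
    · rw [hlr j (by omega), hmr j (by omega)]
end
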